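/- arXiv:1901.04709 — 8 statements merged into one kernel-verified Lean document; each statement's English description precedes it below -/
import Mathlib

section
/- The ring game G has no Nash equilibrium: for every joint strategy s there is a player whose strategy is not a best response to the strategies of the others. -/
/-!
Game-theoretic formalization of Dijkstra's self-stabilization (Apt & Shoja).
Players are `Fin n`; a joint strategy is `s : Fin n → C`.
-/

/-- Payoff in the ring game `G` on the directed ring `0 → 1 → ⋯ → n-1 → 0`:
player `0` plays the anti-coordination game with respect to its predecessor
(player `n-1`, i.e. `0 - 1` in `Fin n`); every other player `i` plays the
coordination game with respect to its predecessor `i - 1`. -/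
def ringPayoff {n : ℕ} [NeZero n] {C : Type*} [DecidableEq C]
    (s : Fin n → C) (i : Fin n) : ℕ :=
  if i = 0 then (if s i = s (i - 1) then 0 else 1)
  else (if s i = s (i - 1) then 1 else 0)

/-- `s i` is a best response of player `i` to the strategies of the others in `s`. -/
def BestResponse {n : ℕ} {C : Type*}
    (p : (Fin n → C) → Fin n → ℕ) (s : Fin n → C) (i : Fin n) : Prop :=
  ∀ c : C, p (Function.update s i c) i ≤ p s i

/-- An improvement step from `s` to `s'` in which player `i` is selected:
only player `i` changes its strategy and its payoff strictly increases. -/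
def StepAt {n : ℕ} {C : Type*}
    (p : (Fin n → C) → Fin n → ℕ) (i : Fin n) (s s' : Fin n → C) : Prop :=
  (∀ j, j ≠ i → s' j = s j) ∧ p s i < p s' i

/-- A joint strategy is legitimate if exactly one player does not play a best response. -/
def Legitimate {n : ℕ} {C : Type*}
    (p : (Fin n → C) → Fin n → ℕ) (s : Fin n → C) : Prop :=
  ∃! i : Fin n, ¬ BestResponse p s i

section RingGame

variable {n : ℕ} [NeZero n] {C : Type*} [DecidableEq C] {s : Fin n → C}

lemma Fin.sub_one_ne_self_of_ne_zero {i : Fin n} (hi : i ≠ 0) : i - 1 ≠ i := by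
  intro h
  have h10 : (1 : Fin n) = 0 := sub_eq_self.mp h
  exact hi (by rw [← mul_one i, h10, mul_zero])

open Fin.NatCast in
lemma Fin.forall_apply_eq_apply_zero_of_apply_sub_one {α : Type*} {f : Fin n → α}
    (hf : ∀ i, i ≠ 0 → f i = f (i - 1)) (i : Fin n) : f i = f 0 := by
  suffices h : ∀ k : ℕ, k < n → f k = f 0 by
    simpa using h i i.isLt
  intro k hk
  induction k with
  | zero => simp
  | succ k ih =>
    have hk0 : ((k + 1 : ℕ) : Fin n) ≠ 0 := by
      rw [Ne, Fin.natCast_eq_zero]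
      exact Nat.not_dvd_of_pos_of_lt k.succ_pos hk
    rw [hf _ hk0, Nat.cast_succ, add_sub_cancel_right, ih (by omega)]

lemma BestResponse.ringPayoff_eq_pred {i : Fin n} (h : BestResponse ringPayoff s i)
    (hi : i ≠ 0) : s i = s (i - 1) := by
  by_contra hne
  have := h (s (i - 1))
  simp [ringPayoff, hi, hne, Fin.sub_one_ne_self_of_ne_zero hi] at this

lemma BestResponse.ringPayoff_zero_ne_pred [Nontrivial C] (h : BestResponse ringPayoff s 0)
    (h10 : (1 : Fin n) ≠ 0) : s 0 ≠ s (0 - 1) := by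
  intro heq
  obtain ⟨c, hc⟩ := exists_ne (s (0 - 1))
  have h0 : (0 : Fin n) - 1 ≠ 0 := by simpa using h10
  have := h c
  simp only [ringPayoff, if_true, Function.update_self, Function.update_of_ne h0, heq] at this
  exact hc (by simpa using this)

end RingGame

/-- The ring game `G` (with `n ≥ 2` players and `|C| ≥ 2` colours)
has no Nash equilibrium: for every joint strategy `s` there is a player whose
strategy is not a best response to the strategies of the others. -/
theorem ring_game_no_nash_equilibrium
    (n : ℕ) [NeZero n] (hn : 2 ≤ n)
    (C : Type*) [Fintype C] [DecidableEq C] (hC : 2 ≤ Fintype.card C)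
    (s : Fin n → C) :
    ∃ i : Fin n, ¬ BestResponse (ringPayoff (n := n) (C := C)) s i := by
  by_contra! hNash
  have : Nontrivial C := Fintype.one_lt_card_iff_nontrivial.mp hC
  have h10 : (1 : Fin n) ≠ 0 := Fin.one_eq_zero_iff.not.mpr (by omega)
  -- every player but `0` copies its predecessor, so the colouring is constant
  have hconst : ∀ i, s i = s 0 :=
    Fin.forall_apply_eq_apply_zero_of_apply_sub_one fun i hi => (hNash i).ringPayoff_eq_pred hi
  exact (hNash 0).ringPayoff_zero_ne_pred h10 (hconst _).symm
end

section
/- The ring game G admits stability: if s -> s' is an improvement step in G and s is legitimate, then s' is legitimate. -/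
section Game

variable {n : ℕ} {C : Type*} {p : (Fin n → C) → Fin n → ℕ}

theorem StepAt.eq_update {i : Fin n} {s s' : Fin n → C} (h : StepAt p i s s') :
    s' = Function.update s i (s' i) :=
  Function.eq_update_iff.mpr ⟨rfl, h.1⟩

theorem StepAt.not_bestResponse {i : Fin n} {s s' : Fin n → C} (h : StepAt p i s s') :
    ¬ BestResponse p s i := fun hbr =>
  (hbr (s' i)).not_gt (h.eq_update ▸ h.2)

theorem Legitimate.bestResponse_of_ne {s : Fin n → C} {i j : Fin n} (hleg : Legitimate p s)
    (hi : ¬ BestResponse p s i) (hj : j ≠ i) : BestResponse p s j :=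
  by_contra fun h => hj (hleg.unique h hi)

theorem Legitimate.of_forall_ne {s : Fin n → C} {i : Fin n} (hi : ¬ BestResponse p s i)
    (h : ∀ j, j ≠ i → BestResponse p s j) : Legitimate p s :=
  ⟨i, hi, fun j hj => by_contra fun hji => hj (h j hji)⟩

end Game

theorem Fin.sub_one_ne_self {n : ℕ} [NeZero n] (hn : 2 ≤ n) (i : Fin n) : i - 1 ≠ i := by
  rw [Ne, sub_eq_self, Fin.ext_iff, Fin.val_one', Fin.val_zero, Nat.mod_eq_of_lt hn]
  exact one_ne_zero

section RingGame

variable {n : ℕ} [NeZero n] {C : Type*} [DecidableEq C]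

theorem ringPayoff_le_one (s : Fin n → C) (i : Fin n) : ringPayoff s i ≤ 1 := by
  unfold ringPayoff
  split_ifs <;> simp

theorem ringPayoff_congr {s s' : Fin n → C} {i : Fin n} (hi : s i = s' i)
    (hpred : s (i - 1) = s' (i - 1)) : ringPayoff s i = ringPayoff s' i := by
  simp only [ringPayoff, hi, hpred]

theorem bestResponse_ringPayoff_congr {s s' : Fin n → C} {i : Fin n} (hi : s i = s' i)
    (hpred : s (i - 1) = s' (i - 1)) :
    BestResponse ringPayoff s i ↔ BestResponse ringPayoff s' i := by
  have hupdate (c : C) : ringPayoff (Function.update s i c) i =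
      ringPayoff (Function.update s' i c) i := by
    apply ringPayoff_congr <;> by_cases h : i - 1 = i <;> simp [Function.update, h, hpred]
  simp only [BestResponse, hupdate, ringPayoff_congr hi hpred]

open Fin.NatCast in
theorem exists_ringPayoff_eq_zero (s : Fin n → C) : ∃ i, ringPayoff s i = 0 := by
  by_contra! h
  have hcopy (i : Fin n) (hi : i ≠ 0) : s i = s (i - 1) := by
    by_contra hne
    exact h i (by simp [ringPayoff, hi, hne])
  have hconst (k : ℕ) : s k = s 0 := by
    induction k with
    | zero => simp
    | succ k ih =>
      by_cases hk : ((k : Fin n) + 1) = 0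
      · rw [Nat.cast_succ, hk]
      · rw [Nat.cast_succ, hcopy _ hk, add_sub_cancel_right, ih]
  have hlast : s (0 - 1) = s 0 := by rw [← Fin.cast_val_eq_self (0 - 1 : Fin n), hconst]
  exact h 0 (by simp only [ringPayoff, hlast, if_true])

variable [Nontrivial C]

theorem bestResponse_ringPayoff_iff (hn : 2 ≤ n) (s : Fin n → C) (i : Fin n) :
    BestResponse ringPayoff s i ↔ ringPayoff s i = 1 := by
  refine ⟨fun hbr => ?_, fun h c => h ▸ ringPayoff_le_one _ i⟩
  have hupdate (c : C) : ringPayoff (Function.update s i c) i =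
      if i = 0 then (if c = s (i - 1) then 0 else 1) else (if c = s (i - 1) then 1 else 0) := by
    simp [ringPayoff, Function.update_of_ne (Fin.sub_one_ne_self hn i)]
  obtain ⟨c, hc⟩ : ∃ c, ringPayoff (Function.update s i c) i = 1 := by
    by_cases hi : i = 0
    · obtain ⟨c, hc⟩ := exists_ne (s (i - 1))
      exact ⟨c, by rw [hupdate, if_pos hi, if_neg hc]⟩
    · exact ⟨s (i - 1), by rw [hupdate, if_neg hi, if_pos rfl]⟩
  exact (ringPayoff_le_one s i).antisymm (hc ▸ hbr c)

theorem exists_not_bestResponse_ringPayoff (hn : 2 ≤ n) (s : Fin n → C) :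
    ∃ i, ¬ BestResponse ringPayoff s i := by
  obtain ⟨i, hi⟩ := exists_ringPayoff_eq_zero s
  exact ⟨i, by simp [bestResponse_ringPayoff_iff hn, hi]⟩

theorem StepAt.bestResponse_ringPayoff (hn : 2 ≤ n) {i : Fin n} {s s' : Fin n → C}
    (h : StepAt ringPayoff i s s') : BestResponse ringPayoff s' i :=
  (bestResponse_ringPayoff_iff hn s' i).mpr
    ((ringPayoff_le_one s' i).antisymm (Nat.one_le_of_lt h.2))

end RingGame

/-- The ring game `G` admits stability: if `s → s'` is an
improvement step in `G` and `s` is legitimate, then `s'` is legitimate. -/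
theorem ring_game_admits_stability
    (n : ℕ) [NeZero n] (hn : 2 ≤ n)
    (C : Type*) [Fintype C] [DecidableEq C] (hC : 2 ≤ Fintype.card C)
    (s s' : Fin n → C) (i : Fin n)
    (hstep : StepAt (ringPayoff (n := n) (C := C)) i s s')
    (hleg : Legitimate (ringPayoff (n := n) (C := C)) s) :
    Legitimate (ringPayoff (n := n) (C := C)) s' := by
  have : Nontrivial C := Fintype.one_lt_card_iff_nontrivial.mp hC
  have hsatisfied : ∀ j, j ≠ i + 1 → BestResponse ringPayoff s' j := by
    intro j hj
    by_cases hji : j = i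
    · exact hji ▸ hstep.bestResponse_ringPayoff hn
    · have hpred : j - 1 ≠ i := fun h => hj (sub_eq_iff_eq_add.mp h)
      exact (bestResponse_ringPayoff_congr (hstep.1 j hji) (hstep.1 _ hpred)).mpr
        (hleg.bestResponse_of_ne hstep.not_bestResponse hji)
  obtain ⟨j, hj⟩ := exists_not_bestResponse_ringPayoff hn s'
  obtain rfl : j = i + 1 := by_contra fun h => hj (hsatisfied j h)
  exact Legitimate.of_forall_ne hj hsatisfied
end

section
/- In the coordination game on a chain of n players with a common strategy set, every improvement path is finite and has length at most n(n-1)/2. -/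
/-- Payoff in the coordination game on the chain `0 → 1 → ⋯ → n-1`:
player `0` has no neighbour, so its payoff is always `0`; every other player `i`
gets payoff `1` if it holds the colour of its predecessor `i - 1` and `0` otherwise. -/
def chainPayoff {n : ℕ} [NeZero n] {C : Type*} [DecidableEq C]
    (s : Fin n → C) (i : Fin n) : ℕ :=
  if i = 0 then 0
  else (if s i = s (i - 1) then 1 else 0)

section ChainAux

variable {n : ℕ} [NeZero n] {C : Type*} [DecidableEq C]

lemma chainPayoff_le_one (s : Fin n → C) (i : Fin n) : chainPayoff s i ≤ 1 := by
  unfold chainPayoff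
  split
  · omega
  · split <;> omega

lemma chainPayoff_zero (s : Fin n → C) : chainPayoff s 0 = 0 := by
  simp [chainPayoff]

/-- The weighted potential of a strategy profile. -/
def chainPot (s : Fin n → C) : ℕ := ∑ j : Fin n, (n - j.val) * chainPayoff s j

lemma fin_val_add_one (i : Fin n) (h : i.val + 1 < n) : ((i + 1 : Fin n)).val = i.val + 1 := by
  have h1 : ((1 : Fin n)).val = 1 % n := Fin.val_one' n
  have e1 : 1 % n = 1 := Nat.mod_eq_of_lt (by omega)
  rw [Fin.val_add, h1, e1, Nat.mod_eq_of_lt h]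

lemma fin_add_one_eq_zero (i : Fin n) (h : i.val + 1 = n) : (i + 1 : Fin n) = 0 := by
  have h1 : ((1 : Fin n)).val = 1 % n := Fin.val_one' n
  ext
  rw [Fin.val_add, h1, Fin.val_zero]
  rcases Nat.lt_or_ge 1 n with h2 | h2
  · have e1 : 1 % n = 1 := Nat.mod_eq_of_lt h2
    rw [e1, h, Nat.mod_self]
  · have h3 : n = 1 := by have := i.isLt; omega
    subst h3
    have h4 : i.val = 0 := by omega
    simp [h4]

/-- The potential strictly increases along every improvement step. -/
lemma chainPot_step {i : Fin n} {s s' : Fin n → C}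
    (h : StepAt (chainPayoff (n := n) (C := C)) i s s') :
    chainPot s + 1 ≤ chainPot s' := by
  obtain ⟨hsame, hlt⟩ := h
  have hle := chainPayoff_le_one s' i
  have hps : chainPayoff s i = 0 := by omega
  have hps' : chainPayoff s' i = 1 := by omega
  have hi0 : i ≠ 0 := by
    intro h0
    rw [h0, chainPayoff_zero] at hps'
    omega
  have hival : 1 ≤ i.val := by
    rcases Nat.eq_zero_or_pos i.val with h0 | h0
    · exact absurd (Fin.ext h0) hi0
    · omega
  have hne : (i + 1 : Fin n) ≠ i := by
    intro hc
    have h10 : (1 : Fin n) = 0 := by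
      have := add_left_cancel (a := i) (b := (1 : Fin n)) (c := 0) (by rw [add_zero]; exact hc)
      exact this
    have hn1 : n = 1 := by
      have := Fin.one_eq_zero_iff.mp h10; omega
    have := i.isLt; omega
  -- payoff of any player other than i and i+1 is unchanged
  have hoff : ∀ j : Fin n, j ≠ i → j ≠ i + 1 → chainPayoff s' j = chainPayoff s j := by
    intro j hj hj1
    unfold chainPayoff
    split
    · rfl
    · have hsub : (j - 1 : Fin n) ≠ i := by
        intro hc
        apply hj1
        rw [← hc, sub_add_cancel]
      rw [hsame j hj, hsame _ hsub]
  -- split the potential sums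
  set f : Fin n → ℕ := fun j => (n - j.val) * chainPayoff s j with hf
  set f' : Fin n → ℕ := fun j => (n - j.val) * chainPayoff s' j with hf'
  have hmem1 : i ∈ (Finset.univ : Finset (Fin n)) := Finset.mem_univ i
  have hmem2 : (i + 1 : Fin n) ∈ (Finset.univ : Finset (Fin n)).erase i :=
    Finset.mem_erase.mpr ⟨hne, Finset.mem_univ _⟩
  have split1 : chainPot s = f i + (f (i + 1) + ∑ j ∈ ((Finset.univ).erase i).erase (i + 1), f j) := by
    rw [Finset.add_sum_erase _ f hmem2, Finset.add_sum_erase _ f hmem1]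
    rfl
  have split2 : chainPot s' = f' i + (f' (i + 1) + ∑ j ∈ ((Finset.univ).erase i).erase (i + 1), f' j) := by
    rw [Finset.add_sum_erase _ f' hmem2, Finset.add_sum_erase _ f' hmem1]
    rfl
  have hrest : ∑ j ∈ ((Finset.univ).erase i).erase (i + 1), f' j
      = ∑ j ∈ ((Finset.univ).erase i).erase (i + 1), f j := by
    apply Finset.sum_congr rfl
    intro j hjmem
    have hj1 : j ≠ i + 1 := (Finset.mem_erase.mp hjmem).1
    have hj : j ≠ i := (Finset.mem_erase.mp ((Finset.mem_erase.mp hjmem).2)).1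
    simp only [hf, hf']
    rw [hoff j hj hj1]
  have hfi : f i = 0 := by simp only [hf]; rw [hps, Nat.mul_zero]
  have hfi' : f' i = n - i.val := by simp only [hf']; rw [hps', Nat.mul_one]
  -- key inequality at the two affected positions
  have hkey : f (i + 1) + 1 ≤ (n - i.val) + f' (i + 1) := by
    rcases Nat.lt_or_ge (i.val + 1) n with hc | hc
    · have hv : ((i + 1 : Fin n)).val = i.val + 1 := fin_val_add_one i hc
      have hb : f (i + 1) ≤ n - (i.val + 1) := by
        simp only [hf, hv]
        calc (n - (i.val + 1)) * chainPayoff s (i + 1)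
            ≤ (n - (i.val + 1)) * 1 := Nat.mul_le_mul_left _ (chainPayoff_le_one s _)
          _ = n - (i.val + 1) := Nat.mul_one _
      have := i.isLt
      omega
    · have hc2 : i.val + 1 = n := by have := i.isLt; omega
      have hz : (i + 1 : Fin n) = 0 := fin_add_one_eq_zero i hc2
      have hb : f (i + 1) = 0 := by
        simp only [hf, hz]; rw [chainPayoff_zero, Nat.mul_zero]
      have := i.isLt
      omega
  rw [split1, split2, hrest, hfi, hfi']
  omega

/-- The potential is bounded by `n (n-1) / 2`. -/
lemma chainPot_le (s : Fin n → C) : chainPot s ≤ n * (n - 1) / 2 := by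
  have h1 : chainPot s ≤ ∑ j : Fin n, (if j.val = 0 then 0 else n - j.val) := by
    apply Finset.sum_le_sum
    intro j _
    by_cases hj : j = 0
    · subst hj
      rw [chainPayoff_zero, Nat.mul_zero]
      simp
    · have hjv : j.val ≠ 0 := fun hc => hj (Fin.ext hc)
      rw [if_neg hjv]
      calc (n - j.val) * chainPayoff s j
          ≤ (n - j.val) * 1 := Nat.mul_le_mul_left _ (chainPayoff_le_one s j)
        _ = n - j.val := Nat.mul_one _
  have h2 : ∑ j : Fin n, (if j.val = 0 then 0 else n - j.val)
      = ∑ m ∈ Finset.range n, (if m = 0 then 0 else n - m) :=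
    Fin.sum_univ_eq_sum_range (fun m => if m = 0 then 0 else n - m) n
  have h3 : ∑ m ∈ Finset.range n, ((if m = 0 then 0 else n - m) + (if m = 0 then n else 0))
      = ∑ m ∈ Finset.range n, (n - m) := by
    apply Finset.sum_congr rfl
    intro m _
    split <;> omega
  have h4 : ∑ m ∈ Finset.range n, (if m = 0 then n else 0) = n := by
    rw [Finset.sum_ite_eq' (Finset.range n) 0 (fun _ => n)]
    rw [if_pos (Finset.mem_range.mpr (Nat.pos_of_ne_zero (NeZero.ne n)))]
  have h5 : ∑ m ∈ Finset.range n, (n - m) = ∑ m ∈ Finset.range n, (m + 1) := by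
    rw [← Finset.sum_range_reflect (fun m => n - m) n]
    apply Finset.sum_congr rfl
    intro m hm
    have := Finset.mem_range.mp hm
    omega
  have h6 : ∑ m ∈ Finset.range n, (m + 1) = (∑ m ∈ Finset.range n, m) + n := by
    rw [Finset.sum_add_distrib, Finset.sum_const, Finset.card_range, smul_eq_mul, Nat.mul_one]
  have h7 : ∑ m ∈ Finset.range n, m = n * (n - 1) / 2 := by
    have := Finset.sum_range_id_mul_two n; omega
  rw [Finset.sum_add_distrib, h4] at h3
  omega

end ChainAux

/-- In the coordination game on a chain of `n` players with a common
strategy set, every improvement path is finite and has length at most `n(n-1)/2`: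
there is no infinite sequence of improvement steps, and any sequence of `k`
consecutive improvement steps satisfies `k ≤ n(n-1)/2`. -/
theorem chain_game_improvement_paths_bounded
    (n : ℕ) [NeZero n] (C : Type*) [DecidableEq C] :
    (¬ ∃ (σ : ℕ → Fin n → C) (sel : ℕ → Fin n),
        ∀ k : ℕ, StepAt (chainPayoff (n := n) (C := C)) (sel k) (σ k) (σ (k + 1))) ∧
    (∀ (k : ℕ) (σ : ℕ → Fin n → C) (sel : ℕ → Fin n),
        (∀ m < k, StepAt (chainPayoff (n := n) (C := C)) (sel m) (σ m) (σ (m + 1))) →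
        k ≤ n * (n - 1) / 2) := by
  have key : ∀ (k : ℕ) (σ : ℕ → Fin n → C) (sel : ℕ → Fin n),
      (∀ m < k, StepAt (chainPayoff (n := n) (C := C)) (sel m) (σ m) (σ (m + 1))) →
      k ≤ n * (n - 1) / 2 := by
    intro k σ sel hsteps
    have mono : ∀ m, m ≤ k → m ≤ chainPot (σ m) := by
      intro m
      induction m with
      | zero => intro _; exact Nat.zero_le _
      | succ m ih =>
        intro hm
        have h1 := ih (by omega)
        have h2 := chainPot_step (hsteps m (by omega))
        omega
    have := mono k le_rfl
    have := chainPot_le (σ k)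
    omega
  refine ⟨?_, key⟩
  rintro ⟨σ, sel, hall⟩
  have := key (n * (n - 1) / 2 + 1) σ sel (fun m _ => hall m)
  omega
end

section
/- In the coordination game on a chain of n players with a common strategy set C with |C| >= n, there exists an improvement path of length exactly n(n-1)/2. -/
namespace ChainAux

def tri : ℕ → ℕ
  | 0 => 0
  | j+1 => tri j + j

lemma two_tri (j : ℕ) : 2 * tri j = j * (j - 1) := by
  induction j with
  | zero => rfl
  | succ k ih =>
    show 2 * (tri k + k) = (k+1) * k
    cases k with
    | zero => rfl
    | succ m =>
      have : 2 * tri (m+1) = (m+1) * m := ih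
      nlinarith

lemma tri_eq (j : ℕ) : tri j = j * (j - 1) / 2 := by
  have := two_tri j
  omega

lemma tri_mono : Monotone tri := by
  apply monotone_nat_of_le_succ
  intro j
  show tri j ≤ tri j + j
  omega

def ph : ℕ → ℕ × ℕ
  | 0 => (1, 0)
  | m+1 => if (ph m).2 + 1 < (ph m).1 then ((ph m).1, (ph m).2 + 1) else ((ph m).1 + 1, 0)

lemma tri_succ (j : ℕ) : tri (j+1) = tri j + j := rfl

lemma ph_succ (m : ℕ) : ph (m+1) = if (ph m).2 + 1 < (ph m).1 then ((ph m).1, (ph m).2 + 1) else ((ph m).1 + 1, 0) := rfl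

lemma ph_spec (m : ℕ) : 1 ≤ (ph m).1 ∧ (ph m).2 < (ph m).1 ∧ tri (ph m).1 + (ph m).2 = m := by
  induction m with
  | zero => exact ⟨le_refl 1, Nat.zero_lt_one, rfl⟩
  | succ k ih =>
    obtain ⟨h1, h2, h3⟩ := ih
    rw [ph_succ]
    split_ifs with h
    · exact ⟨h1, h, by dsimp only; omega⟩
    · exact ⟨by dsimp only; omega, by dsimp only; omega, by dsimp only [tri_succ]; omega⟩

/-- index of the colour of player `i` when the current phase data is `(j, t)`. -/
def idx (n j t i : ℕ) : ℕ := min i (if i + j < n + t then n - 1 - j else n - j)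

/-- the state at time `m`. -/
def st {n : ℕ} {C : Type*} (c : Fin n → C) (m : ℕ) (i : Fin n) : C :=
  c ⟨idx n (ph m).1 (ph m).2 i.val, lt_of_le_of_lt (Nat.min_le_left _ _) i.isLt⟩

lemma st_eq_iff {n : ℕ} {C : Type*} {c : Fin n → C} (hc : Function.Injective c)
    (m m' : ℕ) (i i' : Fin n) :
    st c m i = st c m' i' ↔ idx n (ph m).1 (ph m).2 i.val = idx n (ph m').1 (ph m').2 i'.val := by
  unfold st
  rw [hc.eq_iff, Fin.mk.injEq]

lemma fin_sub_one_val {n : ℕ} [NeZero n] (a : Fin n) (h : a.val ≠ 0) :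
    ((a - 1 : Fin n) : ℕ) = a.val - 1 := by
  have hn : 0 < n := Nat.pos_of_neZero n
  have ha := a.isLt
  rcases Nat.lt_or_ge 1 n with hl | hl
  · have h1 : ((1:Fin n) : ℕ) = 1 := by rw [Fin.val_one' n]; exact Nat.mod_eq_of_lt hl
    have h2 : (1:Fin n) ≤ a := by rw [Fin.le_def]; omega
    have := Fin.sub_val_of_le h2
    omega
  · omega

end ChainAux

set_option maxHeartbeats 1000000 in
open ChainAux in
/-- In the coordination game on a chain of `n` players with a common
strategy set `C` with `|C| ≥ n`, there exists an improvement path of length exactly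
`n(n-1)/2`: a sequence of `n(n-1)/2` consecutive improvement steps after which
no further improvement step is possible (so the path is maximal). -/
theorem chain_game_improvement_path_of_maximal_length
    (n : ℕ) [NeZero n] (C : Type*) [DecidableEq C] [Fintype C]
    (hC : n ≤ Fintype.card C) :
    ∃ (σ : ℕ → Fin n → C) (sel : ℕ → Fin n),
      (∀ m < n * (n - 1) / 2,
        StepAt (chainPayoff (n := n) (C := C)) (sel m) (σ m) (σ (m + 1))) ∧
      (∀ (i : Fin n) (s' : Fin n → C),
        ¬ StepAt (chainPayoff (n := n) (C := C)) i (σ (n * (n - 1) / 2)) s') := by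
  have hn : 0 < n := Nat.pos_of_neZero n
  obtain ⟨c, hc⟩ : ∃ c : Fin n → C, Function.Injective c := by
    have : Fintype.card (Fin n) ≤ Fintype.card C := by simpa
    obtain ⟨f⟩ := Function.Embedding.nonempty_of_card_le this
    exact ⟨f, f.injective⟩
  have hT : n * (n - 1) / 2 = tri n := (tri_eq n).symm
  refine ⟨st c, fun m => ⟨min (n - (ph m).1 + (ph m).2) (n-1), by omega⟩, ?_, ?_⟩
  · -- valid steps
    intro m hm
    obtain ⟨hj1, htj, hsum⟩ := ph_spec m
    set j := (ph m).1 with hjdef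
    set t := (ph m).2 with htdef
    have hjn : j < n := by
      by_contra hge
      have : tri n ≤ tri j := tri_mono (by omega)
      omega
    set i : Fin n := ⟨min (n - j + t) (n-1), by omega⟩ with hidef
    have hip : i.val = n - j + t := by
      show min (n - j + t) (n-1) = n - j + t
      omega
    have hi0 : i.val ≠ 0 := by omega
    have hsub : ((i - 1 : Fin n)).val = n - j + t - 1 := by
      rw [fin_sub_one_val i hi0, hip]
    constructor
    · intro q hq
      have hqp : q.val ≠ n - j + t := fun h => hq (Fin.ext (by rw [h, hip]))
      have hq2 := q.isLt
      rw [st_eq_iff hc]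
      rw [ph_succ, ← hjdef, ← htdef]
      split_ifs with hcase <;> dsimp only <;> unfold idx <;> split_ifs <;> omega
    · have hine : i ≠ 0 := Fin.ne_of_val_ne (by rw [Fin.val_zero]; exact hi0)
      show chainPayoff _ i < chainPayoff _ i
      unfold chainPayoff
      rw [if_neg hine, if_neg hine]
      have hne : ¬ (st c m i = st c m (i-1)) := by
        rw [st_eq_iff hc, hip, hsub, ← hjdef, ← htdef]
        unfold idx
        split_ifs <;> omega
      have heq : st c (m+1) i = st c (m+1) (i-1) := by
        rw [st_eq_iff hc, hip, hsub]
        rw [ph_succ, ← hjdef, ← htdef]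
        split_ifs with hcase <;> dsimp only <;> unfold idx <;> split_ifs <;> omega
      rw [if_neg hne, if_pos heq]
      exact Nat.zero_lt_one
  · -- maximality
    intro i s' hstep
    obtain ⟨hs1, hs2⟩ := hstep
    have hphT : ph (tri n) = (n, 0) := by
      obtain ⟨h1, h2, h3⟩ := ph_spec (tri n)
      have hj : (ph (tri n)).1 = n := by
        by_contra hne
        rcases Nat.lt_or_ge (ph (tri n)).1 n with hl | hg
        · have : tri ((ph (tri n)).1 + 1) ≤ tri n := tri_mono hl
          rw [tri_succ] at this
          omega
        · have hgt : n < (ph (tri n)).1 := by omega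
          have : tri (n + 1) ≤ tri (ph (tri n)).1 := tri_mono hgt
          rw [tri_succ] at this
          omega
      have ht : (ph (tri n)).2 = 0 := by rw [hj] at h3; omega
      exact Prod.ext hj ht
    have hconst : ∀ q : Fin n, st c (n * (n - 1) / 2) q = c ⟨0, hn⟩ := by
      intro q
      unfold st
      congr 1
      apply Fin.ext
      show idx n (ph (n * (n-1)/2)).1 (ph (n * (n-1)/2)).2 q.val = 0
      rw [hT, hphT]
      unfold idx
      dsimp only
      split_ifs <;> omega
    unfold chainPayoff at hs2
    by_cases hi : i = 0
    · rw [if_pos hi, if_pos hi] at hs2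
      omega
    · rw [if_neg hi, if_neg hi] at hs2
      rw [hconst i, hconst (i-1), if_pos rfl] at hs2
      split_ifs at hs2 <;> omega
end

section
/- In every infinite improvement path of the ring game G, player 1 is selected infinitely often. -/
/-!
Suppose player `0` is never selected after some time. By induction along the ring, every
player is eventually never selected: once the predecessor `i - 1` of a player `i ≠ 0` has stopped
moving, a move of `i` copies the colour of `i - 1`, after which `i` already has payoff `1` and
can never improve again. So eventually nobody is selected, which is absurd on an infinite path.
-/

open Filter

section RingGame

variable {n : ℕ} [NeZero n] {C : Type*} [DecidableEq C] {i : Fin n} {s s' : Fin n → C}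

lemma eq_pred_of_stepAt_ringPayoff (hi : i ≠ 0) (h : StepAt ringPayoff i s s') :
    s' i = s' (i - 1) := by
  by_contra hne
  have hlt := h.2
  simp only [ringPayoff, if_neg hi, if_neg hne] at hlt
  exact Nat.not_lt_zero _ hlt

lemma not_stepAt_ringPayoff_of_eq_pred (hi : i ≠ 0) (heq : s i = s (i - 1)) :
    ¬ StepAt ringPayoff i s s' := by
  rintro ⟨-, hlt⟩
  simp only [ringPayoff, if_neg hi, if_pos heq] at hlt
  split at hlt <;> omega

variable {σ : ℕ → Fin n → C} {sel : ℕ → Fin n}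

lemma eventually_sel_ne_of_eventually_sel_ne_pred
    (hpath : ∀ k, StepAt ringPayoff (sel k) (σ k) (σ (k + 1))) (hi : i ≠ 0)
    (hpred : ∀ᶠ m in atTop, sel m ≠ i - 1) : ∀ᶠ m in atTop, sel m ≠ i := by
  obtain ⟨K, hK⟩ := eventually_atTop.1 hpred
  by_cases hmove : ∃ m₀, K ≤ m₀ ∧ sel m₀ = i
  · obtain ⟨m₀, hm₀K, hm₀⟩ := hmove
    have hmatched : ∀ m, m₀ + 1 ≤ m → σ m i = σ m (i - 1) := by
      intro m hm
      induction m, hm using Nat.le_induction with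
      | base => exact eq_pred_of_stepAt_ringPayoff hi (hm₀ ▸ hpath m₀)
      | succ m hm ih =>
        have hsel : sel m ≠ i := fun he => not_stepAt_ringPayoff_of_eq_pred hi ih (he ▸ hpath m)
        have hsel_pred : sel m ≠ i - 1 := hK m (by omega)
        rw [(hpath m).1 i hsel.symm, (hpath m).1 (i - 1) hsel_pred.symm]
        exact ih
    refine eventually_atTop.2 ⟨m₀ + 1, fun m hm he => ?_⟩
    exact not_stepAt_ringPayoff_of_eq_pred hi (hmatched m hm) (he ▸ hpath m)
  · push Not at hmove
    exact eventually_atTop.2 ⟨K, hmove⟩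

lemma eventually_sel_ne_of_eventually_sel_ne_zero
    (hpath : ∀ k, StepAt ringPayoff (sel k) (σ k) (σ (k + 1)))
    (h0 : ∀ᶠ m in atTop, sel m ≠ 0) (i : Fin n) : ∀ᶠ m in atTop, sel m ≠ i := by
  induction i using WellFoundedLT.induction with
  | ind i ih =>
    by_cases hi : i = 0
    · exact hi ▸ h0
    · have hlt : i - 1 < i := by
        rw [Fin.lt_def, Fin.val_sub_one_of_ne_zero hi]
        exact Nat.sub_one_lt (Fin.val_ne_zero_iff.2 hi)
      exact eventually_sel_ne_of_eventually_sel_ne_pred hpath hi (ih _ hlt)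

end RingGame

theorem ring_game_player_one_selected_infinitely_often_general
    (n : ℕ) [NeZero n]
    (C : Type*) [DecidableEq C]
    (σ : ℕ → Fin n → C) (sel : ℕ → Fin n)
    (hpath : ∀ k : ℕ, StepAt (ringPayoff (n := n) (C := C)) (sel k) (σ k) (σ (k + 1))) :
    ∀ k : ℕ, ∃ m, k ≤ m ∧ sel m = 0 := by
  intro k
  by_contra! h0
  have hnobody : ∀ᶠ m in atTop, ∀ i, sel m ≠ i := eventually_all.2
    (eventually_sel_ne_of_eventually_sel_ne_zero hpath (eventually_atTop.2 ⟨k, h0⟩))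
  obtain ⟨m, hm⟩ := hnobody.exists
  exact hm (sel m) rfl

/-- In every infinite improvement path of the ring game `G`,
player `1` (here indexed as player `0`) is selected infinitely often. -/
theorem ring_game_player_one_selected_infinitely_often
    (n : ℕ) [NeZero n] (hn : 2 ≤ n)
    (C : Type*) [Fintype C] [DecidableEq C] (hC : 2 ≤ Fintype.card C)
    (σ : ℕ → Fin n → C) (sel : ℕ → Fin n)
    (hpath : ∀ k : ℕ, StepAt (ringPayoff (n := n) (C := C)) (sel k) (σ k) (σ (k + 1))) :
    ∀ k : ℕ, ∃ m, k ≤ m ∧ sel m = 0 :=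
  ring_game_player_one_selected_infinitely_often_general n C σ sel hpath
end

section
/- In the ring game G with n = 3 players, every improvement path ensures self-stabilization in 2 steps: every player is selected in it infinitely often and every joint strategy occurring after the first 2 steps is legitimate. -/
set_option linter.unusedSectionVars false
section RingGameAux
variable {C : Type*} [Fintype C] [DecidableEq C]

private lemma fin3 : ∀ j : Fin 3, j = 0 ∨ j = 1 ∨ j = 2 := by decide

private lemma rp0 (s : Fin 3 → C) : ringPayoff s 0 = if s 0 = s 2 then 0 else 1 := by
  simp [ringPayoff, show (0:Fin 3) - 1 = 2 from by decide]

private lemma rp1 (s : Fin 3 → C) : ringPayoff s 1 = if s 1 = s 0 then 1 else 0 := by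
  simp [ringPayoff, show (1:Fin 3) - 1 = 0 from by decide,
    show (1:Fin 3) ≠ 0 from by decide]

private lemma rp2 (s : Fin 3 → C) : ringPayoff s 2 = if s 2 = s 1 then 1 else 0 := by
  simp [ringPayoff, show (2:Fin 3) - 1 = 1 from by decide,
    show (2:Fin 3) ≠ 0 from by decide]

private lemma step0 {s s' : Fin 3 → C} (h : StepAt ringPayoff 0 s s') :
    s 0 = s 2 ∧ s' 0 ≠ s' 2 ∧ s' 1 = s 1 ∧ s' 2 = s 2 := by
  obtain ⟨hfix, hlt⟩ := h
  have h1 := hfix 1 (by decide)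
  have h2 := hfix 2 (by decide)
  rw [rp0 s, rp0 s'] at hlt
  split_ifs at hlt with ha hb <;> try omega
  exact ⟨ha, hb, h1, h2⟩

private lemma step1 {s s' : Fin 3 → C} (h : StepAt ringPayoff 1 s s') :
    s 1 ≠ s 0 ∧ s' 1 = s' 0 ∧ s' 0 = s 0 ∧ s' 2 = s 2 := by
  obtain ⟨hfix, hlt⟩ := h
  have h0 := hfix 0 (by decide)
  have h2 := hfix 2 (by decide)
  rw [rp1 s, rp1 s'] at hlt
  split_ifs at hlt with ha hb hc <;> try omega
  exact ⟨ha, hc, h0, h2⟩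

private lemma step2 {s s' : Fin 3 → C} (h : StepAt ringPayoff 2 s s') :
    s 2 ≠ s 1 ∧ s' 2 = s' 1 ∧ s' 0 = s 0 ∧ s' 1 = s 1 := by
  obtain ⟨hfix, hlt⟩ := h
  have h0 := hfix 0 (by decide)
  have h1 := hfix 1 (by decide)
  rw [rp2 s, rp2 s'] at hlt
  split_ifs at hlt with ha hb hc <;> try omega
  exact ⟨ha, hc, h0, h1⟩

private lemma br0_iff (hC : 2 ≤ Fintype.card C) (s : Fin 3 → C) :
    BestResponse ringPayoff s 0 ↔ s 0 ≠ s 2 := by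
  constructor
  · intro hbr he
    obtain ⟨c, hcne⟩ : ∃ c : C, c ≠ s 2 :=
      Fintype.exists_ne_of_one_lt_card (by omega) (s 2)
    have hh := hbr c
    rw [rp0, rp0] at hh
    have e0 : Function.update s 0 c 0 = c := Function.update_self 0 c s
    have e2 : Function.update s 0 c 2 = s 2 := Function.update_of_ne (by decide) c s
    rw [e0, e2] at hh
    simp [hcne, he] at hh
  · intro hne c
    rw [rp0, rp0]
    simp [hne]
    split <;> omega

private lemma br1_iff (s : Fin 3 → C) :
    BestResponse ringPayoff s 1 ↔ s 1 = s 0 := by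
  constructor
  · intro hbr
    by_contra hne
    have hh := hbr (s 0)
    rw [rp1, rp1] at hh
    have e1 : Function.update s 1 (s 0) 1 = s 0 := Function.update_self 1 (s 0) s
    have e0 : Function.update s 1 (s 0) 0 = s 0 := Function.update_of_ne (by decide) _ s
    rw [e1, e0] at hh
    simp [hne] at hh
  · intro he c
    rw [rp1, rp1]
    simp [he]
    split <;> omega

private lemma br2_iff (s : Fin 3 → C) :
    BestResponse ringPayoff s 2 ↔ s 2 = s 1 := by
  constructor
  · intro hbr
    by_contra hne
    have hh := hbr (s 1)
    rw [rp2, rp2] at hh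
    have e2 : Function.update s 2 (s 1) 2 = s 1 := Function.update_self 2 (s 1) s
    have e1 : Function.update s 2 (s 1) 1 = s 1 := Function.update_of_ne (by decide) _ s
    rw [e2, e1] at hh
    simp [hne] at hh
  · intro he c
    rw [rp2, rp2]
    simp [he]
    split <;> omega

/-- Legitimate state whose unique non-best-responder is player 0: all equal. -/
private def Shape0 (s : Fin 3 → C) : Prop := s 0 = s 1 ∧ s 1 = s 2
/-- Legitimate state whose unique non-best-responder is player 1. -/
private def Shape1 (s : Fin 3 → C) : Prop := s 1 = s 2 ∧ s 0 ≠ s 1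
/-- Legitimate state whose unique non-best-responder is player 2. -/
private def Shape2 (s : Fin 3 → C) : Prop := s 0 = s 1 ∧ s 1 ≠ s 2

private lemma shape0_legit (hC : 2 ≤ Fintype.card C) {s : Fin 3 → C} (h : Shape0 s) :
    Legitimate (ringPayoff (n := 3) (C := C)) s := by
  obtain ⟨h01, h12⟩ := h
  refine ⟨0, ?_, ?_⟩
  · show ¬ BestResponse ringPayoff s 0
    rw [br0_iff hC]
    exact fun hne => hne (h01.trans h12)
  · intro j hj
    rcases fin3 j with rfl | rfl | rfl
    · rfl
    · exact absurd ((br1_iff s).mpr h01.symm) hj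
    · exact absurd ((br2_iff s).mpr h12.symm) hj

private lemma shape1_legit (hC : 2 ≤ Fintype.card C) {s : Fin 3 → C} (h : Shape1 s) :
    Legitimate (ringPayoff (n := 3) (C := C)) s := by
  obtain ⟨h12, h01⟩ := h
  refine ⟨1, ?_, ?_⟩
  · show ¬ BestResponse ringPayoff s 1
    rw [br1_iff]
    exact fun he => h01 he.symm
  · intro j hj
    rcases fin3 j with rfl | rfl | rfl
    · exact absurd ((br0_iff hC s).mpr (fun he => h01 (he.trans h12.symm))) hj
    · rfl
    · exact absurd ((br2_iff s).mpr h12.symm) hj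

private lemma shape2_legit (hC : 2 ≤ Fintype.card C) {s : Fin 3 → C} (h : Shape2 s) :
    Legitimate (ringPayoff (n := 3) (C := C)) s := by
  obtain ⟨h01, h12⟩ := h
  refine ⟨2, ?_, ?_⟩
  · show ¬ BestResponse ringPayoff s 2
    rw [br2_iff]
    exact fun he => h12 he.symm
  · intro j hj
    rcases fin3 j with rfl | rfl | rfl
    · exact absurd ((br0_iff hC s).mpr (fun he => h12 (h01.symm.trans he))) hj
    · exact absurd ((br1_iff s).mpr h01.symm) hj
    · rfl

private lemma trans0 {s s' : Fin 3 → C} {i : Fin 3}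
    (hst : StepAt ringPayoff i s s') (h : Shape0 s) : i = 0 ∧ Shape1 s' := by
  rcases fin3 i with rfl | rfl | rfl
  · obtain ⟨_, hne, h1, h2⟩ := step0 hst
    have e12 : s' 1 = s' 2 := h1.trans (h.2.trans h2.symm)
    exact ⟨rfl, e12, fun he => hne (he.trans e12)⟩
  · exact absurd h.1.symm (step1 hst).1
  · exact absurd h.2.symm (step2 hst).1

private lemma trans1 {s s' : Fin 3 → C} {i : Fin 3}
    (hst : StepAt ringPayoff i s s') (h : Shape1 s) : i = 1 ∧ Shape2 s' := by
  rcases fin3 i with rfl | rfl | rfl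
  · exact absurd ((step0 hst).1.trans h.1.symm) h.2
  · obtain ⟨hne, hnew, h0, h2⟩ := step1 hst
    refine ⟨rfl, hnew.symm, fun he => h.2 ?_⟩
    -- he : s' 1 = s' 2 ; want s 0 = s 1
    have : s 0 = s 2 := ((h0.symm.trans hnew.symm).trans he).trans h2
    exact this.trans h.1.symm
  · exact absurd h.1.symm (step2 hst).1

private lemma trans2 {s s' : Fin 3 → C} {i : Fin 3}
    (hst : StepAt ringPayoff i s s') (h : Shape2 s) : i = 2 ∧ Shape0 s' := by
  rcases fin3 i with rfl | rfl | rfl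
  · exact absurd (h.1.symm.trans (step0 hst).1) h.2
  · exact absurd h.1.symm (step1 hst).1
  · obtain ⟨hne, hnew, h0, h1⟩ := step2 hst
    exact ⟨rfl, h0.trans (h.1.trans h1.symm), hnew.symm⟩

private lemma after1 {s s' : Fin 3 → C} (hst : StepAt ringPayoff 1 s s') :
    Shape0 s' ∨ Shape2 s' := by
  obtain ⟨hne, hnew, h0, h2⟩ := step1 hst
  by_cases h : s 0 = s 2
  · exact Or.inl ⟨hnew.symm, hnew.trans (h0.trans (h.trans h2.symm))⟩
  · refine Or.inr ⟨hnew.symm, fun he => h ?_⟩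
    exact ((hnew.trans h0).symm.trans he).trans h2

private lemma after2 {s s' : Fin 3 → C} (hst : StepAt ringPayoff 2 s s') :
    Shape0 s' ∨ Shape1 s' := by
  obtain ⟨hne, hnew, h0, h1⟩ := step2 hst
  by_cases h : s 0 = s 1
  · exact Or.inl ⟨h0.trans (h.trans h1.symm), hnew.symm⟩
  · exact Or.inr ⟨hnew.symm, fun he => h (h0.symm.trans (he.trans h1))⟩

end RingGameAux

/-- In the ring game `G` with `n = 3` players, every improvement path
ensures self-stabilization in `2` steps: every player is selected in it infinitely
often and every joint strategy occurring after the first `2` steps is legitimate. -/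
theorem ring_game_three_players_self_stabilization_in_two_steps
    (C : Type*) [Fintype C] [DecidableEq C] (hC : 2 ≤ Fintype.card C)
    (σ : ℕ → Fin 3 → C) (sel : ℕ → Fin 3)
    (hpath : ∀ k : ℕ, StepAt (ringPayoff (n := 3) (C := C)) (sel k) (σ k) (σ (k + 1))) :
    (∀ (i : Fin 3) (k : ℕ), ∃ m, k ≤ m ∧ sel m = i) ∧
    (∀ m : ℕ, 2 ≤ m → Legitimate (ringPayoff (n := 3) (C := C)) (σ m)) := by
  -- σ 2 has one of the three shapes
  have base : Shape0 (σ 2) ∨ Shape1 (σ 2) ∨ Shape2 (σ 2) := by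
    rcases fin3 (sel 1) with h1 | h1 | h1
    · -- sel 1 = 0 : then sel 0 ≠ 0, σ 1 has a shape, necessarily Shape0
      have hs1 := hpath 1
      rw [h1] at hs1
      have hσ1 : Shape0 (σ 1) ∨ Shape1 (σ 1) ∨ Shape2 (σ 1) := by
        rcases fin3 (sel 0) with h0 | h0 | h0
        · have hs0 := hpath 0
          rw [h0] at hs0
          exact absurd (step0 hs0).2.1 (not_not_intro (step0 hs1).1)
        · have hs0 := hpath 0
          rw [h0] at hs0
          rcases after1 hs0 with h | h
          · exact Or.inl h
          · exact Or.inr (Or.inr h)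
        · have hs0 := hpath 0
          rw [h0] at hs0
          rcases after2 hs0 with h | h
          · exact Or.inl h
          · exact Or.inr (Or.inl h)
      rcases hσ1 with h | h | h
      · exact Or.inr (Or.inl (trans0 (hpath 1) h).2)
      · have := (trans1 (hpath 1) h).1
        rw [h1] at this
        exact absurd this (by decide)
      · have := (trans2 (hpath 1) h).1
        rw [h1] at this
        exact absurd this (by decide)
    · have hs1 := hpath 1
      rw [h1] at hs1
      rcases after1 hs1 with h | h
      · exact Or.inl h
      · exact Or.inr (Or.inr h)
    · have hs1 := hpath 1
      rw [h1] at hs1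
      rcases after2 hs1 with h | h
      · exact Or.inl h
      · exact Or.inr (Or.inl h)
  have key : ∀ t, Shape0 (σ (2 + t)) ∨ Shape1 (σ (2 + t)) ∨ Shape2 (σ (2 + t)) := by
    intro t
    induction t with
    | zero => exact base
    | succ t ih =>
      rcases ih with h | h | h
      · exact Or.inr (Or.inl (trans0 (hpath (2 + t)) h).2)
      · exact Or.inr (Or.inr (trans1 (hpath (2 + t)) h).2)
      · exact Or.inl (trans2 (hpath (2 + t)) h).2
  have keym : ∀ m, 2 ≤ m → Shape0 (σ m) ∨ Shape1 (σ m) ∨ Shape2 (σ m) := by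
    intro m hm
    obtain ⟨t, rfl⟩ : ∃ t, m = 2 + t := ⟨m - 2, by omega⟩
    exact key t
  constructor
  · intro i k
    have hm2 : 2 ≤ max 2 k := le_max_left _ _
    set m := max 2 k with hmdef
    have hkm : k ≤ m := le_max_right _ _
    rcases keym m hm2 with h | h | h
    · obtain ⟨e0, h1'⟩ := trans0 (hpath m) h
      obtain ⟨e1, h2'⟩ := trans1 (hpath (m + 1)) h1'
      obtain ⟨e2, _⟩ := trans2 (hpath (m + 2)) h2'
      rcases fin3 i with rfl | rfl | rfl
      · exact ⟨m, hkm, e0⟩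
      · exact ⟨m + 1, by omega, e1⟩
      · exact ⟨m + 2, by omega, e2⟩
    · obtain ⟨e1, h2'⟩ := trans1 (hpath m) h
      obtain ⟨e2, h0'⟩ := trans2 (hpath (m + 1)) h2'
      obtain ⟨e0, _⟩ := trans0 (hpath (m + 2)) h0'
      rcases fin3 i with rfl | rfl | rfl
      · exact ⟨m + 2, by omega, e0⟩
      · exact ⟨m, hkm, e1⟩
      · exact ⟨m + 1, by omega, e2⟩
    · obtain ⟨e2, h0'⟩ := trans2 (hpath m) h
      obtain ⟨e0, h1'⟩ := trans0 (hpath (m + 1)) h0'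
      obtain ⟨e1, _⟩ := trans1 (hpath (m + 2)) h1'
      rcases fin3 i with rfl | rfl | rfl
      · exact ⟨m + 1, by omega, e0⟩
      · exact ⟨m + 2, by omega, e1⟩
      · exact ⟨m, hkm, e2⟩
  · intro m hm
    rcases keym m hm with h | h | h
    · exact shape0_legit hC h
    · exact shape1_legit hC h
    · exact shape2_legit hC h
end

section
/- The bound |C| >= n - 1 is optimal: in the ring game G with n >= 4 players and |C| = n - 2, there exist a cyclic order on C, a scheduler f satisfying f(s, 1) = s_1' (the successor of s_1 in that cyclic order), and an infinite improvement path generated by f that does not ensure self-stabilization: it contains non-legitimate joint strategies beyond every point. -/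
set_option linter.unusedSectionVars false
set_option linter.unusedVariables false
set_option linter.unnecessarySimpa false

namespace RingGameAux

/-! ### Fin arithmetic helpers -/

lemma fin_zero_sub_one_val {n : ℕ} [NeZero n] (hn : 2 ≤ n) : ((0:Fin n) - 1).val = n - 1 := by
  rw [Fin.sub_def]
  have h1 : 1 % n = 1 := Nat.mod_eq_of_lt (by omega)
  simp [Fin.val_one', h1]

lemma fin_sub_one_val {n : ℕ} [NeZero n] (hn : 2 ≤ n) (i : Fin n) (hi : i.val ≠ 0) :
    (i - 1).val = i.val - 1 := by
  rw [Fin.sub_def]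
  have h1 : 1 % n = 1 := Nat.mod_eq_of_lt (by omega)
  have := i.isLt
  simp [Fin.val_one', h1]
  rw [show (n - 1) + i.val = (i.val - 1) + n by omega, Nat.add_mod_right,
    Nat.mod_eq_of_lt (by omega)]

lemma sub_one_ne {n : ℕ} [NeZero n] (hn : 2 ≤ n) (i : Fin n) : i - 1 ≠ i := by
  intro hh
  have h2 := sub_eq_self.mp hh
  have h1 : 1 % n = 1 := Nat.mod_eq_of_lt (by omega)
  simp [Fin.ext_iff, Fin.val_one', h1] at h2

lemma zero_sub_one_ne_zero {n : ℕ} [NeZero n] (hn : 2 ≤ n) : (0 : Fin n) - 1 ≠ 0 := by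
  intro hh
  have : ((0 : Fin n) - 1).val = 0 := by rw [hh]; rfl
  rw [fin_zero_sub_one_val hn] at this
  omega

/-! ### The cyclic permutation -/

variable {C : Type*} [DecidableEq C]

def cyc (m : ℕ) (e : C ≃ ZMod m) : Equiv.Perm C :=
  e.trans ((Equiv.addRight (1 : ZMod m)).trans e.symm)

lemma cyc_apply (m : ℕ) (e : C ≃ ZMod m) (x : C) : cyc m e x = e.symm (e x + 1) := rfl

lemma cyc_pow (m : ℕ) (e : C ≃ ZMod m) (k : ℕ) (x : C) :
    ((cyc m e) ^ k) x = e.symm (e x + (k : ZMod m)) := by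
  induction k with
  | zero => simp
  | succ k ih =>
    rw [pow_succ', Equiv.Perm.mul_apply, ih, cyc_apply]
    simp
    ring_nf

lemma cyc_surj (m : ℕ) [NeZero m] (e : C ≃ ZMod m) (x y : C) :
    ∃ k : ℕ, ((cyc m e) ^ k) x = y := by
  refine ⟨(e y - e x).val, ?_⟩
  rw [cyc_pow]
  simp [ZMod.natCast_val, ZMod.cast_id]

lemma cyc_ne (m : ℕ) [Fact (1 < m)] (e : C ≃ ZMod m) (x : C) : cyc m e x ≠ x := by
  rw [cyc_apply]
  intro h
  have : e x + 1 = e x := by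
    have := congrArg e h
    simpa using this
  simp at this

/-! ### Payoff and best-response basics -/

variable {n : ℕ} [NeZero n]

lemma payoff_le_one (s : Fin n → C) (i : Fin n) : ringPayoff s i ≤ 1 := by
  unfold ringPayoff
  split <;> split <;> omega

lemma improve_zero (hn : 2 ≤ n) (s : Fin n → C) (h : s 0 = s (0 - 1)) (c : C) (hc : c ≠ s 0) :
    ringPayoff s 0 < ringPayoff (Function.update s 0 c) 0 := by
  unfold ringPayoff
  rw [Function.update_self, Function.update_of_ne (zero_sub_one_ne_zero hn)]
  have hc' : c ≠ s (-1) := by rw [show (-1 : Fin n) = 0 - 1 from (zero_sub 1).symm, ← h]; exact hc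
  simp [h, hc']

lemma improve_pos (hn : 2 ≤ n) (s : Fin n → C) (i : Fin n) (hi : i ≠ 0) (h : s i ≠ s (i - 1)) :
    ringPayoff s i < ringPayoff (Function.update s i (s (i - 1))) i := by
  unfold ringPayoff
  rw [Function.update_self, Function.update_of_ne (sub_one_ne hn i)]
  simp [hi, h]

lemma notBR_zero_of (hn : 2 ≤ n) (s : Fin n → C) (h : s 0 = s (0 - 1)) (c : C) (hc : c ≠ s 0) :
    ¬ BestResponse (ringPayoff (n := n) (C := C)) s 0 :=
  fun hb => absurd (hb c) (not_le.mpr (improve_zero hn s h c hc))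

lemma notBR_pos_of (hn : 2 ≤ n) (s : Fin n → C) (i : Fin n) (hi : i ≠ 0) (h : s i ≠ s (i - 1)) :
    ¬ BestResponse (ringPayoff (n := n) (C := C)) s i :=
  fun hb => absurd (hb (s (i - 1))) (not_le.mpr (improve_pos hn s i hi h))

lemma eq_of_notBR_zero (s : Fin n → C)
    (h : ¬ BestResponse (ringPayoff (n := n) (C := C)) s 0) : s 0 = s (0 - 1) := by
  by_contra hne
  apply h
  intro c
  have h1 : ringPayoff s 0 = 1 := by unfold ringPayoff; rw [if_pos rfl, if_neg hne]
  rw [h1]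
  exact payoff_le_one _ _

lemma ne_of_notBR_pos (s : Fin n → C) (i : Fin n) (hi : i ≠ 0)
    (h : ¬ BestResponse (ringPayoff (n := n) (C := C)) s i) : s i ≠ s (i - 1) := by
  intro heq
  apply h
  intro c
  have h1 : ringPayoff s i = 1 := by unfold ringPayoff; rw [if_neg hi, if_pos heq]
  rw [h1]
  exact payoff_le_one _ _

/-! ### The infinite improvement path -/

def val (n m k i : ℕ) : ZMod m :=
  if i = 0 then ((k / n : ℕ) : ZMod m) + (if k % n = 0 then 0 else 1)
  else ((k / n : ℕ) : ZMod m) + 1 - (i : ZMod m) + (if i ≤ n - k % n then 0 else 1)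

variable {m : ℕ}

lemma cast_n (hn : 4 ≤ n) (hm : m = n - 2) : ((n : ℕ) : ZMod m) = 2 := by
  have h : n = m + 2 := by omega
  rw [h]
  push_cast
  simp

lemma val_round0 (hn : 4 ≤ n) (hm : m = n - 2) (k : ℕ) (hj : k % n = 0) :
    val n m k 0 = val n m k (n - 1) := by
  unfold val
  rw [if_pos rfl, if_neg (by omega : ¬ (n - 1 = 0)), hj, if_pos rfl,
    if_pos (by omega : n - 1 ≤ n - 0)]
  rw [Nat.cast_sub (by omega : 1 ≤ n), cast_n hn hm]
  push_cast
  ring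

lemma val_round2 (hn : 4 ≤ n) (hm : m = n - 2) [Fact (1 < m)] (k : ℕ) (hj : k % n = 0) :
    val n m k 2 ≠ val n m k 1 := by
  unfold val
  rw [if_neg (by omega : ¬ (2 = 0)), if_neg (by omega : ¬ (1 = 0)), hj,
    if_pos (by omega : 2 ≤ n - 0), if_pos (by omega : 1 ≤ n - 0)]
  intro h
  exact one_ne_zero (by linear_combination (-1 : ZMod m) * h)

lemma val_mid (hn : 4 ≤ n) (hm : m = n - 2) [Fact (1 < m)] (k : ℕ) (hj : k % n ≠ 0) :
    val n m k (n - k % n) ≠ val n m k (n - k % n - 1) := by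
  have hjlt : k % n < n := Nat.mod_lt _ (by omega)
  obtain ⟨j, hjd⟩ : ∃ j, j = k % n := ⟨_, rfl⟩
  rw [← hjd] at hj hjlt ⊢
  have hp1 : 1 ≤ n - j := by omega
  unfold val
  rw [← hjd]
  rw [if_neg (by omega : ¬ (n - j = 0)), if_pos (le_refl (n - j))]
  by_cases hp : n - j = 1
  · rw [hp, if_pos rfl, if_neg hj]
    intro h
    exact one_ne_zero (by linear_combination (-1 : ZMod m) * h)
  · rw [if_neg (by omega : ¬ (n - j - 1 = 0)), if_pos (by omega : n - j - 1 ≤ n - j)]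
    rw [show n - j - 1 = n - (j+1) by omega, Nat.cast_sub (by omega : j + 1 ≤ n),
      Nat.cast_sub (by omega : j ≤ n)]
    intro h
    push_cast at h
    exact one_ne_zero (by linear_combination (-1 : ZMod m) * h)

lemma val_step (hn : 4 ≤ n) (hm : m = n - 2) (k i : ℕ) (hi : i < n) :
    val n m (k+1) i =
      if i = (n - k % n) % n then
        (if i = 0 then val n m k 0 + 1 else val n m k (i - 1))
      else val n m k i := by
  have hn0 : 0 < n := by omega
  have hjlt : k % n < n := Nat.mod_lt _ hn0
  have hk := Nat.div_add_mod k n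
  obtain ⟨j, hjd⟩ : ∃ j, j = k % n := ⟨_, rfl⟩
  obtain ⟨r, hrd⟩ : ∃ r, r = k / n := ⟨_, rfl⟩
  rw [← hjd] at hjlt
  rw [← hjd, ← hrd] at hk
  unfold val
  rw [← hjd, ← hrd]
  by_cases hj : j = 0
  · have e1 : (k+1) % n = 1 := by
      rw [show k + 1 = 1 + n * r by omega, Nat.add_mul_mod_self_left,
        Nat.mod_eq_of_lt (by omega)]
    have e2 : (k+1) / n = r := by
      rw [show k + 1 = 1 + n * r by omega, Nat.add_mul_div_left _ _ hn0,
        Nat.div_eq_of_lt (by omega), Nat.zero_add]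
    have hp : (n - j) % n = 0 := by rw [hj, Nat.sub_zero, Nat.mod_self]
    rw [hp, e1, e2]
    by_cases hi0 : i = 0
    · simp only [hi0, if_pos rfl, if_neg (by omega : ¬ ((1:ℕ) = 0)), hj]
      norm_num
    · simp only [if_neg hi0]
      rw [hj, if_pos (by omega : i ≤ n - 1), if_pos (by omega : i ≤ n - 0)]
  · by_cases hj1 : j = n - 1
    · have ekk : k + 1 = n * (r + 1) := by rw [Nat.mul_add, Nat.mul_one]; omega
      have e1 : (k+1) % n = 0 := by
        rw [ekk, Nat.mul_mod_right]
      have e2 : (k+1) / n = r + 1 := by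
        rw [ekk, Nat.mul_div_cancel_left _ hn0]
      have hp : (n - j) % n = 1 := by
        rw [show n - j = 1 by omega, Nat.mod_eq_of_lt (by omega)]
      rw [hp, e1, e2]
      by_cases hi1 : i = 1
      · subst hi1
        simp only [Nat.sub_self, if_pos rfl, if_neg (by omega : ¬ ((1:ℕ) = 0)), if_neg hj]
        rw [if_pos (by omega : (1:ℕ) ≤ n - 0)]
        push_cast
        ring
      · rw [if_neg hi1]
        by_cases hi0 : i = 0
        · simp only [hi0, if_pos rfl, if_neg hj]
          push_cast
          ring
        · simp only [if_neg hi0]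
          rw [if_pos (by omega : i ≤ n - 0), if_neg (by omega : ¬ (i ≤ n - j))]
          push_cast
          ring
    · have e1 : (k+1) % n = j + 1 := by
        rw [show k + 1 = (j + 1) + n * r by omega, Nat.add_mul_mod_self_left,
          Nat.mod_eq_of_lt (by omega)]
      have e2 : (k+1) / n = r := by
        rw [show k + 1 = (j + 1) + n * r by omega, Nat.add_mul_div_left _ _ hn0,
          Nat.div_eq_of_lt (by omega), Nat.zero_add]
      have hp : (n - j) % n = n - j := Nat.mod_eq_of_lt (by omega)
      rw [hp, e1, e2]
      by_cases hip : i = n - j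
      · rw [if_pos hip]
        simp only [if_neg (by omega : ¬ i = 0), if_neg (by omega : ¬ (i - 1 = 0))]
        rw [if_neg (by omega : ¬ (i ≤ n - (j + 1))), if_pos (by omega : i - 1 ≤ n - j)]
        rw [Nat.cast_sub (by omega : 1 ≤ i)]
        push_cast
        ring
      · rw [if_neg hip]
        by_cases hi0 : i = 0
        · simp only [hi0, if_pos rfl]
          rw [if_neg (by omega : ¬ (j + 1 = 0)), if_neg hj]
          simp
        · simp only [if_neg hi0]
          have hiff : (i ≤ n - (j+1)) ↔ (i ≤ n - j) := by omega
          rw [if_congr hiff rfl rfl]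

end RingGameAux

open RingGameAux in
theorem ring_game_colour_bound_optimal
    (n : ℕ) [NeZero n] (hn : 4 ≤ n)
    (C : Type*) [Fintype C] [DecidableEq C] (hC : Fintype.card C = n - 2) :
    ∃ (π : Equiv.Perm C) (f : (Fin n → C) → Fin n → C)
      (σ : ℕ → Fin n → C) (sel : ℕ → Fin n),
      (∀ x y : C, ∃ k : ℕ, (π ^ k) x = y) ∧
      (∀ (s : Fin n → C) (i : Fin n),
        ¬ BestResponse (ringPayoff (n := n) (C := C)) s i →
        ringPayoff s i < ringPayoff (Function.update s i (f s i)) i) ∧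
      (∀ s : Fin n → C, f s 0 = π (s 0)) ∧
      (∀ k : ℕ,
        ¬ BestResponse (ringPayoff (n := n) (C := C)) (σ k) (sel k) ∧
        σ (k + 1) = Function.update (σ k) (sel k) (f (σ k) (sel k))) ∧
      (∀ k : ℕ, ∃ m, k ≤ m ∧ ¬ Legitimate (ringPayoff (n := n) (C := C)) (σ m)) := by
  classical
  have hn2 : 2 ≤ n := by omega
  have hn0 : 0 < n := by omega
  haveI : NeZero (n - 2) := ⟨by omega⟩
  haveI : Fact (1 < n - 2) := ⟨by omega⟩
  obtain ⟨e⟩ : Nonempty (C ≃ ZMod (n - 2)) := Fintype.card_eq.mp (by rw [hC, ZMod.card])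
  set π : Equiv.Perm C := cyc (n - 2) e with hπ
  set f : (Fin n → C) → Fin n → C :=
    fun s i => if i = 0 then π (s 0) else s (i - 1) with hf
  set σ : ℕ → Fin n → C := fun k i => e.symm (val n (n - 2) k i.val) with hσ
  set sel : ℕ → Fin n := fun k => ⟨(n - k % n) % n, Nat.mod_lt _ hn0⟩ with hsel
  -- ¬ best response facts along the path
  have hkey : ∀ k : ℕ, ¬ BestResponse (ringPayoff (n := n) (C := C)) (σ k) (sel k) := by
    intro k
    by_cases hj : k % n = 0
    · have hsel0 : sel k = 0 := by
        rw [hsel]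
        apply Fin.ext
        simp [hj]
      rw [hsel0]
      apply notBR_zero_of hn2
      · show e.symm (val n (n-2) k (0 : Fin n).val) = e.symm (val n (n-2) k ((0 - 1 : Fin n)).val)
        rw [fin_zero_sub_one_val hn2]
        exact congrArg _ (by simpa using val_round0 hn rfl k hj)
      · exact cyc_ne (n - 2) e (σ k 0)
    · have hjlt : k % n < n := Nat.mod_lt _ hn0
      have hselv : (sel k).val = n - k % n := by
        rw [hsel]
        exact Nat.mod_eq_of_lt (by omega)
      have hselne : sel k ≠ 0 := by
        intro hcon
        have := congrArg Fin.val hcon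
        rw [hselv] at this
        simp at this
        omega
      apply notBR_pos_of hn2 _ _ hselne
      show e.symm (val n (n-2) k (sel k).val) ≠ e.symm (val n (n-2) k ((sel k - 1)).val)
      rw [fin_sub_one_val hn2 _ (by rw [hselv]; omega), hselv]
      intro hcon
      exact val_mid hn rfl k hj (e.symm.injective hcon)
  refine ⟨π, f, σ, sel, ?_, ?_, ?_, ?_, ?_⟩
  · exact cyc_surj (n - 2) e
  · intro s i hBR
    by_cases hi : i = 0
    · subst hi
      rw [hf]
      simp only [if_pos rfl]
      exact improve_zero hn2 s (eq_of_notBR_zero s hBR) _ (cyc_ne (n - 2) e (s 0))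
    · rw [hf]
      simp only [if_neg hi]
      exact improve_pos hn2 s i hi (ne_of_notBR_pos s i hi hBR)
  · intro s
    rw [hf]
    simp
  · intro k
    refine ⟨hkey k, ?_⟩
    funext i
    have hv := val_step hn rfl k i.val i.isLt
    by_cases hi : i = sel k
    · have hiv0 : i.val = (n - k % n) % n := congrArg Fin.val hi
      rw [← hi, Function.update_self]
      by_cases hj : k % n = 0
      · have hcond : (n - k % n) % n = 0 := by rw [hj]; simp
        have hi0 : i = 0 := by
          apply Fin.ext
          rw [hiv0, hcond]
          rfl
        have hv0 : val n (n-2) (k+1) 0 = val n (n-2) k 0 + 1 := by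
          rw [val_step hn rfl k 0 (by omega), if_pos hcond.symm, if_pos rfl]
        rw [hf]
        simp only [hi0, if_pos rfl]
        rw [hσ, hπ, cyc_apply]
        simp only [Fin.val_zero, hv0, Equiv.apply_symm_apply]
        simp
      · have hmod : (n - k % n) % n = n - k % n := by
          have : k % n < n := Nat.mod_lt _ hn0
          exact Nat.mod_eq_of_lt (by omega)
        have hiv : i.val = n - k % n := by rw [hiv0, hmod]
        have hjlt : k % n < n := Nat.mod_lt _ hn0
        have hvne : i.val ≠ 0 := by rw [hiv]; omega
        have hine : i ≠ 0 := by
          intro h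
          exact hvne (by rw [h, Fin.val_zero])
        rw [hf]
        simp only [if_neg hine]
        rw [hσ]
        simp only []
        apply congrArg
        rw [fin_sub_one_val hn2 i hvne]
        rw [hv, if_pos hiv0, if_neg hvne]
    · rw [Function.update_of_ne hi, hσ]
      simp only []
      apply congrArg
      rw [hv, if_neg]
      intro hcon
      exact hi (Fin.ext hcon)
  · intro k
    refine ⟨n * k + n, by nlinarith, ?_⟩
    have hj : (n * k + n) % n = 0 := by
      rw [show n * k + n = n * (k + 1) by ring, Nat.mul_mod_right]
    set K := n * k + n with hK
    rintro ⟨i, hi, huniq⟩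
    have h2lt : 2 < n := by omega
    have h0 : ¬ BestResponse (ringPayoff (n := n) (C := C)) (σ K) 0 := by
      apply notBR_zero_of hn2
      · show e.symm (val n (n-2) K (0 : Fin n).val) = e.symm (val n (n-2) K ((0 - 1 : Fin n)).val)
        rw [fin_zero_sub_one_val hn2]
        exact congrArg _ (by simpa using val_round0 hn rfl K hj)
      · exact cyc_ne (n - 2) e (σ K 0)
    have h2 : ¬ BestResponse (ringPayoff (n := n) (C := C)) (σ K) ⟨2, h2lt⟩ := by
      have hne2 : (⟨2, h2lt⟩ : Fin n) ≠ 0 := by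
        intro hcon
        have := congrArg Fin.val hcon
        simp at this
      apply notBR_pos_of hn2 _ _ hne2
      show e.symm (val n (n-2) K (⟨2, h2lt⟩ : Fin n).val) ≠
        e.symm (val n (n-2) K ((⟨2, h2lt⟩ - 1 : Fin n)).val)
      rw [fin_sub_one_val hn2 _ (by simp)]
      intro hcon
      exact val_round2 hn rfl K hj (e.symm.injective hcon)
    have e0 := huniq 0 h0
    have e2 := huniq ⟨2, h2lt⟩ h2
    rw [← e2] at e0
    have := congrArg Fin.val e0
    simp at this
end

section
/- In the four-state game on n >= 3 players, every scheduler f satisfying f(s, 1) = s_1 ⊕ 2, f(s, i) = s_i ⊕ 1 for 1 < i < n, and f(s, n) = s_n ⊕ 2 ensures self-stabilization: in every improvement path generated by f, every player is selected infinitely often and, from a certain point on, every joint strategy in it is legitimate. -/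
/-- `s i` is a best response of player `i` relative to the allowed strategy sets
`A` (player `i` may only use strategies `c` with `A i c`). -/
def BestResponseOn {n : ℕ} {C : Type*}
    (p : (Fin n → C) → Fin n → ℕ) (A : Fin n → C → Prop)
    (s : Fin n → C) (i : Fin n) : Prop :=
  ∀ c : C, A i c → p (Function.update s i c) i ≤ p s i

/-- A joint strategy is legitimate (relative to the allowed strategy sets `A`)
if exactly one player does not play a best response. -/
def LegitimateOn {n : ℕ} {C : Type*}
    (p : (Fin n → C) → Fin n → ℕ) (A : Fin n → C → Prop)
    (s : Fin n → C) : Prop :=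
  ∃! i : Fin n, ¬ BestResponseOn p A s i

/-- Allowed strategies in the four-state game on `n` players (indexed `0, …, n-1`):
the bottom machine (player `0`) may use only `{1, 3}`, the top machine (player `n-1`)
only `{0, 2}`, and every normal machine all of `ZMod 4 = {0, 1, 2, 3}`. -/
def fourValid (n : ℕ) [NeZero n] (i : Fin n) (c : ZMod 4) : Prop :=
  if i = 0 then c = 1 ∨ c = 3
  else if i.val = n - 1 then c = 0 ∨ c = 2
  else True

/-- Payoff in the four-state game on `n` players with strategies in `ZMod 4`
(`+` being addition modulo `4`):
`p 0 s = 0` if `s 0 + 1 = s 1` and `1` otherwise;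
for `0 < i < n-1`, `p i s = 0` if both `s i + 1` and `s i + 2` belong to
`{s (i-1), s (i+1)}`, `p i s = 1` if `s i + 1 ∈ {s (i-1), s (i+1)}` but
`s i + 2 ∉ {s (i-1), s (i+1)}`, and `p i s = 2` otherwise;
`p (n-1) s = 0` if `s (n-1) + 1 = s (n-2)` and `1` otherwise. -/
def fourPayoff (n : ℕ) [NeZero n] (s : Fin n → ZMod 4) (i : Fin n) : ℕ :=
  if i = 0 then (if s 0 + 1 = s 1 then 0 else 1)
  else if i.val = n - 1 then (if s i + 1 = s (i - 1) then 0 else 1)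
  else
    if (s i + 1 = s (i - 1) ∨ s i + 1 = s (i + 1)) ∧
       (s i + 2 = s (i - 1) ∨ s i + 2 = s (i + 1)) then 0
    else if s i + 1 = s (i - 1) ∨ s i + 1 = s (i + 1) then 1
    else 2

/-!
Read a joint strategy through the differences `x j = s (j + 1) - s j` across the edges
`j = 0, …, n - 2`, and call an odd difference a token. Machine `i` is privileged exactly when
edge `i` carries a 1 or edge `i - 1` carries a 3, and the scheduler's moves are those of
Dijkstra's four-state protocol: a 1 travels one edge down, a 3 one edge up, a 1 on the bottom
edge turns into a 3 and a 3 on the top edge into a 1; the remaining moves make tokens collide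
or bounce off a difference 2.

Those remaining moves strictly lower the weight (2 per token, 1 per difference 2), so from
some point on only the four pure moves occur and the number of tokens stays constant. Tokens
then keep their order, and only the first token can turn from 1 into 3 and only the last one
from 3 into 1; with two or more tokens the total distance the tokens still have to travel,
plus a penalty for each end token still facing the wrong way, drops at every step. Hence a
single token remains, exactly one machine is privileged, and the token goes round a cycle of
length `2 (n - 1)` that privileges every machine.
-/

open Finset Function

namespace FourState

abbrev IsToken (v : ZMod 4) : Prop := v = 1 ∨ v = 3

def edgeSum (m : ℕ) (w : ℕ → ZMod 4 → ℕ) (x : ℕ → ZMod 4) : ℕ :=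
  ∑ j ∈ range (m + 1), w j (x j)

theorem edgeSum_update_add {m j : ℕ} (hj : j ≤ m) (w : ℕ → ZMod 4 → ℕ) (x : ℕ → ZMod 4)
    (v : ZMod 4) : edgeSum m w (update x j v) + w j (x j) = edgeSum m w x + w j v := by
  have hmem : j ∈ range (m + 1) := mem_range.2 (by omega)
  simp only [edgeSum, apply_update (fun k => w k) x]
  rw [sum_update_of_mem hmem, sum_eq_add_sum_sdiff_singleton_of_mem hmem (fun k => w k (x k))]
  ring

theorem edgeSum_update_update_add {m j : ℕ} (hj : j < m) (w : ℕ → ZMod 4 → ℕ)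
    (x : ℕ → ZMod 4) (a b : ZMod 4) :
    edgeSum m w (update (update x j a) (j + 1) b) + w j (x j) + w (j + 1) (x (j + 1)) =
      edgeSum m w x + w j a + w (j + 1) b := by
  have h₁ := edgeSum_update_add (by omega : j + 1 ≤ m) w (update x j a) b
  have h₂ := edgeSum_update_add hj.le w x a
  rw [update_of_ne (by omega)] at h₁
  omega

def tokens (m : ℕ) (x : ℕ → ZMod 4) : Finset ℕ :=
  (range (m + 1)).filter fun j => IsToken (x j)

theorem card_tokens (m : ℕ) (x : ℕ → ZMod 4) :
    #(tokens m x) = edgeSum m (fun _ v => if IsToken v then 1 else 0) x :=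
  card_filter _ _

/-- A move of machine `i` on the edge values `x 0, …, x m`: machine `i` sits between edges
`i - 1` and `i`, the bottom machine `0` and the top machine `m + 1` have a single edge. -/
inductive TokenStep (m : ℕ) : (ℕ → ZMod 4) → (ℕ → ZMod 4) → ℕ → Prop
  | bottom {x : ℕ → ZMod 4} : x 0 = 1 → TokenStep m x (update x 0 3) 0
  | middle {x : ℕ → ZMod 4} {j : ℕ} : j < m → (x j = 3 ∨ x (j + 1) = 1) →
      TokenStep m x (update (update x j (x j + 1)) (j + 1) (x (j + 1) - 1)) (j + 1)
  | top {x : ℕ → ZMod 4} : x m = 3 → TokenStep m x (update x m 1) (m + 1)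

inductive PureStep (m : ℕ) : (ℕ → ZMod 4) → (ℕ → ZMod 4) → ℕ → Prop
  | bottom {x : ℕ → ZMod 4} : x 0 = 1 → PureStep m x (update x 0 3) 0
  | right {x : ℕ → ZMod 4} {j : ℕ} : j < m → x j = 3 → x (j + 1) = 0 →
      PureStep m x (update (update x j 0) (j + 1) 3) (j + 1)
  | left {x : ℕ → ZMod 4} {j : ℕ} : j < m → x j = 0 → x (j + 1) = 1 →
      PureStep m x (update (update x j 1) (j + 1) 0) (j + 1)
  | top {x : ℕ → ZMod 4} : x m = 3 → PureStep m x (update x m 1) (m + 1)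

def weight (v : ZMod 4) : ℕ := if v = 0 then 0 else if v = 2 then 1 else 2

theorem weight_middle_move : ∀ a b : ZMod 4, (a = 3 ∨ b = 1) →
    weight (a + 1) + weight (b - 1) ≤ weight a + weight b ∧
    (weight (a + 1) + weight (b - 1) = weight a + weight b →
      a = 3 ∧ b = 0 ∨ a = 0 ∧ b = 1) := by
  decide

theorem TokenStep.weight_le_and_pureStep_of_eq {m i : ℕ} {x y : ℕ → ZMod 4}
    (h : TokenStep m x y i) :
    edgeSum m (fun _ => weight) y ≤ edgeSum m (fun _ => weight) x ∧
    (edgeSum m (fun _ => weight) y = edgeSum m (fun _ => weight) x → PureStep m x y i) := by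
  cases h with
  | bottom hx =>
    have hsum := edgeSum_update_add (Nat.zero_le m) (fun _ => weight) x 3
    rw [hx, show weight 1 = weight 3 from rfl] at hsum
    exact ⟨by omega, fun _ => .bottom hx⟩
  | top hx =>
    have hsum := edgeSum_update_add (le_refl m) (fun _ => weight) x 1
    rw [hx, show weight 3 = weight 1 from rfl] at hsum
    exact ⟨by omega, fun _ => .top hx⟩
  | @middle j hj hpriv =>
    have hsum := edgeSum_update_update_add hj (fun _ => weight) x (x j + 1) (x (j + 1) - 1)
    obtain ⟨hle, hpure⟩ := weight_middle_move _ _ hpriv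
    refine ⟨by omega, fun heq => ?_⟩
    obtain ⟨ha, hb⟩ | ⟨ha, hb⟩ := hpure (by omega)
    · rw [ha, hb]; exact .right hj ha hb
    · rw [ha, hb]; exact .left hj ha hb

theorem TokenStep.tokens_nonempty {m i : ℕ} {x y : ℕ → ZMod 4} (h : TokenStep m x y i) :
    (tokens m x).Nonempty := by
  simp only [Finset.Nonempty, tokens, mem_filter, mem_range]
  cases h with
  | bottom hx => exact ⟨0, by omega, .inl hx⟩
  | @middle j hj hpriv =>
    rcases hpriv with h | h
    · exact ⟨j, by omega, .inr h⟩
    · exact ⟨j + 1, by omega, .inl h⟩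
  | top hx => exact ⟨m, by omega, .inr hx⟩

theorem PureStep.card_tokens_eq {m i : ℕ} {x y : ℕ → ZMod 4} (h : PureStep m x y i) :
    #(tokens m y) = #(tokens m x) := by
  rw [card_tokens, card_tokens]
  cases h with
  | bottom hx =>
    have hsum := edgeSum_update_add (Nat.zero_le m) (fun _ v => if IsToken v then 1 else 0) x 3
    simp +decide only [hx, ↓reduceIte] at hsum
    omega
  | top hx =>
    have hsum := edgeSum_update_add (le_refl m) (fun _ v => if IsToken v then 1 else 0) x 1
    simp +decide only [hx, ↓reduceIte] at hsum
    omega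
  | right hj ha hb =>
    have hsum := edgeSum_update_update_add hj (fun _ v => if IsToken v then 1 else 0) x 0 3
    simp +decide only [ha, hb, ↓reduceIte] at hsum
    omega
  | left hj ha hb =>
    have hsum := edgeSum_update_update_add hj (fun _ v => if IsToken v then 1 else 0) x 1 0
    simp +decide only [ha, hb, ↓reduceIte] at hsum
    omega

/-- The position of a lone token on the cycle it runs through under pure steps: a 3 on edge
`j` is at `j`, a 1 on edge `j` at `2 m + 1 - j`. -/
def phase (m j : ℕ) (v : ZMod 4) : ℕ := if v = 3 then j else if v = 1 then 2 * m + 1 - j else 0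

def machineAt (m p : ℕ) : ℕ := if p ≤ m then p + 1 else 2 * m + 1 - p

theorem PureStep.phase_succ {m i : ℕ} {x y : ℕ → ZMod 4} (h : PureStep m x y i) :
    (edgeSum m (phase m) y : ZMod (2 * m + 2)) = edgeSum m (phase m) x + 1 := by
  suffices ∃ t, edgeSum m (phase m) y + (2 * m + 2) * t = edgeSum m (phase m) x + 1 by
    obtain ⟨t, ht⟩ := this
    rw [← Nat.cast_add_one, ← ht]
    simp
  cases h with
  | bottom hx =>
    have hsum := edgeSum_update_add (Nat.zero_le m) (phase m) x 3
    simp +decide only [phase, hx, ↓reduceIte] at hsum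
    exact ⟨1, by omega⟩
  | top hx =>
    have hsum := edgeSum_update_add (le_refl m) (phase m) x 1
    simp +decide only [phase, hx, ↓reduceIte] at hsum
    exact ⟨0, by omega⟩
  | right hj ha hb =>
    have hsum := edgeSum_update_update_add hj (phase m) x 0 3
    simp +decide only [phase, ha, hb, ↓reduceIte] at hsum
    exact ⟨0, by omega⟩
  | left hj ha hb =>
    have hsum := edgeSum_update_update_add hj (phase m) x 1 0
    simp +decide only [phase, ha, hb, ↓reduceIte] at hsum
    exact ⟨0, by omega⟩

theorem edgeSum_phase_of_tokens_eq {m P : ℕ} {x : ℕ → ZMod 4} (hx : tokens m x = {P}) :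
    edgeSum m (phase m) x = phase m P (x P) := by
  have hP : P ∈ tokens m x := hx ▸ mem_singleton_self P
  refine sum_eq_single_of_mem P (mem_filter.1 hP).1 fun j hj hjP => ?_
  have hj' : j ∉ tokens m x := by simpa [hx] using hjP
  simp only [tokens, mem_filter, hj, true_and, IsToken, not_or] at hj'
  simp [phase, hj'.1, hj'.2]

theorem edgeSum_phase_lt_of_tokens_eq {m P : ℕ} {x : ℕ → ZMod 4} (hx : tokens m x = {P}) :
    edgeSum m (phase m) x < 2 * m + 2 := by
  have hP : P ∈ tokens m x := hx ▸ mem_singleton_self P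
  simp only [tokens, mem_filter, mem_range] at hP
  rw [edgeSum_phase_of_tokens_eq hx, phase]
  split_ifs <;> omega

theorem PureStep.eq_machineAt {m i P : ℕ} {x y : ℕ → ZMod 4} (h : PureStep m x y i)
    (hx : tokens m x = {P}) : i = machineAt m (edgeSum m (phase m) x) := by
  have htok : ∀ j ≤ m, IsToken (x j) → j = P := fun j hj htok => by
    simpa [hx] using (show j ∈ tokens m x from mem_filter.2 ⟨mem_range.2 (by omega), htok⟩)
  rw [edgeSum_phase_of_tokens_eq hx]
  cases h with
  | bottom hx0 =>
    obtain rfl := htok 0 (Nat.zero_le m) (.inl hx0)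
    simp +decide only [phase, machineAt, hx0, ↓reduceIte]
    split_ifs <;> omega
  | top hxm =>
    obtain rfl := htok m le_rfl (.inr hxm)
    simp +decide only [phase, machineAt, hxm, ↓reduceIte]
    split_ifs <;> omega
  | @right j hj ha hb =>
    obtain rfl := htok j hj.le (.inr ha)
    simp +decide only [phase, machineAt, ha, ↓reduceIte]
    split_ifs <;> omega
  | @left j hj ha hb =>
    obtain rfl := htok (j + 1) hj (.inl hb)
    simp +decide only [phase, machineAt, hb, ↓reduceIte]
    split_ifs <;> omega

def FirstTokenIs (c : ZMod 4) (x : ℕ → ZMod 4) : Prop :=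
  ∃ p, x p = c ∧ ∀ q < p, ¬ IsToken (x q)

theorem firstTokenIs_of_zero {c : ZMod 4} {x : ℕ → ZMod 4} (h : x 0 = c) : FirstTokenIs c x :=
  ⟨0, h, fun _ hq => absurd hq (Nat.not_lt_zero _)⟩

theorem not_firstTokenIs_of_zero {c : ZMod 4} {x : ℕ → ZMod 4} (h : IsToken (x 0))
    (hc : x 0 ≠ c) : ¬ FirstTokenIs c x := by
  rintro ⟨p, hp, hbefore⟩
  obtain rfl | hp0 := Nat.eq_zero_or_pos p
  · exact hc hp
  · exact hbefore 0 hp0 h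

theorem firstTokenIs_congr {c : ZMod 4} {x y : ℕ → ZMod 4} {p : ℕ}
    (hxy : ∀ q ≤ p, y q = x q) (hp : IsToken (x p)) : FirstTokenIs c y ↔ FirstTokenIs c x := by
  have key : ∀ u v : ℕ → ZMod 4, (∀ q ≤ p, u q = v q) → IsToken (u p) →
      FirstTokenIs c u → FirstTokenIs c v := by
    rintro u v huv hu ⟨p', hp'c, hbefore⟩
    have hp' : p' ≤ p := not_lt.1 fun hlt => hbefore p hlt hu
    exact ⟨p', huv p' hp' ▸ hp'c, fun q hq => huv q (by omega) ▸ hbefore q hq⟩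
  exact ⟨key y x hxy (hxy p le_rfl ▸ hp), key x y (fun q hq => (hxy q hq).symm) hp⟩

theorem FirstTokenIs.of_move {c : ZMod 4} {x y : ℕ → ZMod 4} {a b : ℕ}
    (hab : a + 1 = b ∨ b + 1 = a) (hc : IsToken c) (hxa : IsToken (x a))
    (hxb : ¬ IsToken (x b)) (hya : ¬ IsToken (y a)) (hyb : y b = x a)
    (hy : ∀ q ≤ max a b, q ≠ a → q ≠ b → y q = x q) (hx : FirstTokenIs c x) :
    FirstTokenIs c y := by
  obtain ⟨p, hpc, hbefore⟩ := hx
  have hpa : p ≤ a := not_lt.1 fun hlt => hbefore a hlt hxa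
  obtain hpa | rfl := hpa.lt_or_eq
  · have hpb : p ≠ b := by rintro rfl; exact hxb (hpc ▸ hc)
    refine ⟨p, hy p (by omega) hpa.ne hpb ▸ hpc, fun q hq => ?_⟩
    rw [hy q (by omega) (by omega) (by omega)]
    exact hbefore q hq
  · refine ⟨b, hyb ▸ hpc, fun q hq => ?_⟩
    by_cases hqp : q = p
    · exact hqp ▸ hya
    · rw [hy q (by omega) hqp (by omega)]
      exact hbefore q (by omega)

theorem firstTokenIs_iff_of_move {c : ZMod 4} {x y : ℕ → ZMod 4} {a b : ℕ}
    (hab : a + 1 = b ∨ b + 1 = a) (hc : IsToken c) (hxa : IsToken (x a))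
    (hxb : ¬ IsToken (x b)) (hya : ¬ IsToken (y a)) (hyb : y b = x a)
    (hy : ∀ q ≤ max a b, q ≠ a → q ≠ b → y q = x q) :
    FirstTokenIs c y ↔ FirstTokenIs c x :=
  ⟨.of_move hab.symm hc (hyb ▸ hxa) hya hxb hyb.symm
    (fun q hq hqb hqa => (hy q (by omega) hqa hqb).symm),
   .of_move hab hc hxa hxb hya hyb hy⟩

theorem flags_iff_of_move {m a b : ℕ} {x y : ℕ → ZMod 4} (ha : a ≤ m) (hb : b ≤ m)
    (hab : a + 1 = b ∨ b + 1 = a) (hxa : IsToken (x a)) (hxb : ¬ IsToken (x b))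
    (hya : ¬ IsToken (y a)) (hyb : y b = x a) (hy : ∀ q, q ≠ a → q ≠ b → y q = x q) :
    (FirstTokenIs 1 y ↔ FirstTokenIs 1 x) ∧
      (FirstTokenIs 3 (fun q => y (m - q)) ↔ FirstTokenIs 3 (fun q => x (m - q))) :=
  ⟨firstTokenIs_iff_of_move hab (.inl rfl) hxa hxb hya hyb fun q _ => hy q,
   firstTokenIs_iff_of_move (a := m - a) (b := m - b) (by omega) (.inr rfl)
     (by simpa [Nat.sub_sub_self ha] using hxa) (by simpa [Nat.sub_sub_self hb] using hxb)
     (by simpa [Nat.sub_sub_self ha] using hya)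
     (by simp [Nat.sub_sub_self ha, Nat.sub_sub_self hb, hyb])
     fun q _ hqa hqb => hy _ (by omega) (by omega)⟩

def travel (m j : ℕ) (v : ZMod 4) : ℕ := if v = 1 then j else if v = 3 then m - j else 0

open Classical in
/-- `travel` is the distance a token still covers before it turns; each flag adds `m + 1` while
an end token has still to turn: the first one if it is a 1, the last one if it is a 3.
`FirstTokenIs 3 (fun q => x (m - q))` reads the edges backwards from `m`; a witness `p > m` is
impossible, since `q = m < p` reads the same token `x 0`. -/
noncomputable def potential (m : ℕ) (x : ℕ → ZMod 4) : ℕ :=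
  edgeSum m (travel m) x + (m + 1) * (if FirstTokenIs 1 x then 1 else 0) +
    (m + 1) * (if FirstTokenIs 3 (fun q => x (m - q)) then 1 else 0)

theorem PureStep.potential_lt {m i : ℕ} {x y : ℕ → ZMod 4} (h : PureStep m x y i)
    (hT : 2 ≤ #(tokens m x)) : potential m y < potential m x := by
  obtain ⟨p, hp, hp0⟩ := exists_mem_ne hT 0
  obtain ⟨p', hp', hp'm⟩ := exists_mem_ne hT m
  simp only [tokens, mem_filter, mem_range] at hp hp'
  unfold potential
  cases h with
  | bottom hx =>
    have hsum := edgeSum_update_add (Nat.zero_le m) (travel m) x 3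
    simp +decide only [travel, hx, ↓reduceIte] at hsum
    have hR : FirstTokenIs 3 (fun q => update x 0 3 (m - q)) ↔
        FirstTokenIs 3 (fun q => x (m - q)) :=
      firstTokenIs_congr (p := m - p) (fun q hq => update_of_ne (by omega) _ _)
        (by simpa [Nat.sub_sub_self (by omega : p ≤ m)] using hp.2)
    rw [if_pos (firstTokenIs_of_zero hx),
      if_neg (not_firstTokenIs_of_zero (by simp +decide) (by simp +decide)), hR]
    omega
  | top hx =>
    have hsum := edgeSum_update_add (le_refl m) (travel m) x 1
    simp +decide only [travel, hx, ↓reduceIte] at hsum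
    have hL : FirstTokenIs 1 (update x m 1) ↔ FirstTokenIs 1 x :=
      firstTokenIs_congr (p := p') (fun q hq => update_of_ne (by omega) _ _) hp'.2
    rw [hL, if_pos (firstTokenIs_of_zero (x := fun q => x (m - q)) (by simpa using hx)),
      if_neg (not_firstTokenIs_of_zero (x := fun q => update x m 1 (m - q)) (by simp +decide)
        (by simp +decide))]
    omega
  | @right j hj ha hb =>
    have hsum := edgeSum_update_update_add hj (travel m) x 0 3
    simp +decide only [travel, ha, hb, ↓reduceIte] at hsum
    obtain ⟨hL, hR⟩ := flags_iff_of_move (x := x) (y := update (update x j 0) (j + 1) 3)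
      (a := j) (b := j + 1) hj.le hj (.inl rfl)
      (by simp +decide [ha]) (by simp +decide [hb]) (by simp +decide) (by simp [ha])
      fun q hqa hqb => by rw [update_of_ne hqb, update_of_ne hqa]
    rw [hL, hR]
    omega
  | @left j hj ha hb =>
    have hsum := edgeSum_update_update_add hj (travel m) x 1 0
    simp +decide only [travel, ha, hb, ↓reduceIte] at hsum
    obtain ⟨hL, hR⟩ := flags_iff_of_move (x := x) (y := update (update x j 1) (j + 1) 0)
      (a := j + 1) (b := j) hj hj.le (.inr rfl)
      (by simp +decide [hb]) (by simp +decide [ha]) (by simp +decide) (by simp [hb])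
      fun q hqa hqb => by rw [update_of_ne hqa, update_of_ne hqb]
    rw [hL, hR]
    omega

section Run

variable {m : ℕ} {e : ℕ → ℕ → ZMod 4} {c : ℕ → ℕ}

theorem eventually_pureStep (h : ∀ k, TokenStep m (e k) (e (k + 1)) (c k)) :
    ∃ K, ∀ k ≥ K, PureStep m (e k) (e (k + 1)) (c k) := by
  have hanti : Antitone fun k => edgeSum m (fun _ => weight) (e k) :=
    antitone_nat_of_succ_le fun k => (h k).weight_le_and_pureStep_of_eq.1
  obtain ⟨K, hK⟩ := WellFoundedLT.antitone_chain_condition hanti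
  exact ⟨K, fun k hk => (h k).weight_le_and_pureStep_of_eq.2
    ((hK (k + 1) (by omega)).symm.trans (hK k hk))⟩

theorem eventually_pureStep_and_single_token (h : ∀ k, TokenStep m (e k) (e (k + 1)) (c k)) :
    ∃ K, ∀ k ≥ K, PureStep m (e k) (e (k + 1)) (c k) ∧ #(tokens m (e k)) = 1 := by
  obtain ⟨K, hK⟩ := eventually_pureStep h
  have hconst : ∀ k ≥ K, #(tokens m (e k)) = #(tokens m (e K)) := by
    intro k hk
    induction k, hk using Nat.le_induction with
    | base => rfl
    | succ k hk ih => rw [(hK k hk).card_tokens_eq, ih]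
  refine ⟨K, fun k hk => ⟨hK k hk, (hconst k hk).trans (le_antisymm ?_ ?_)⟩⟩
  · by_contra! htwo
    refine not_strictAnti_of_wellFoundedLT (fun d => potential m (e (K + d)))
      (strictAnti_nat_of_succ_lt fun d => ?_)
    exact (hK (K + d) (by omega)).potential_lt (by rw [hconst _ (by omega)]; omega)
  · exact card_pos.2 (h K).tokens_nonempty

theorem selects_every_machine {K : ℕ}
    (h : ∀ k ≥ K, PureStep m (e k) (e (k + 1)) (c k) ∧ #(tokens m (e k)) = 1)
    {i : ℕ} (hi : i ≤ m + 1) (k : ℕ) : ∃ k' ≥ k, c k' = i := by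
  have : NeZero (2 * m + 2) := ⟨by omega⟩
  set Φ := fun k => edgeSum m (phase m) (e k)
  have hshift : ∀ d, (Φ (max k K + d) : ZMod (2 * m + 2)) = Φ (max k K) + d := by
    intro d
    induction d with
    | zero => simp
    | succ d ih =>
      rw [← add_assoc, (h _ (by omega)).1.phase_succ, ih]
      push_cast
      ring
  obtain ⟨p, hp, hpi⟩ : ∃ p < 2 * m + 2, machineAt m p = i :=
    ⟨if i = 0 then 2 * m + 1 else i - 1, by split_ifs <;> omega,
      by unfold machineAt; split_ifs <;> omega⟩
  set k' := max k K + ((p : ZMod (2 * m + 2)) - Φ (max k K)).val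
  obtain ⟨P, hP⟩ := card_eq_one.1 (h k' (by omega)).2
  have hΦ : Φ k' = p := by
    have := congrArg ZMod.val (hshift ((p : ZMod (2 * m + 2)) - Φ (max k K)).val)
    rw [ZMod.natCast_zmod_val, add_sub_cancel, ZMod.val_natCast, ZMod.val_natCast,
      Nat.mod_eq_of_lt (edgeSum_phase_lt_of_tokens_eq hP), Nat.mod_eq_of_lt hp] at this
    exact this
  refine ⟨k', by omega, ?_⟩
  rw [(h k' (by omega)).1.eq_machineAt hP]
  exact (congrArg (machineAt m) hΦ).trans hpi

end Run

def Privileged (m : ℕ) (x : ℕ → ZMod 4) (i : ℕ) : Prop :=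
  (i ≤ m ∧ x i = 1) ∨ (0 < i ∧ x (i - 1) = 3)

theorem privileged_iff_of_tokens_eq {m P : ℕ} {x : ℕ → ZMod 4} (hx : tokens m x = {P})
    {i : ℕ} (hi : i ≤ m + 1) : Privileged m x i ↔ i = if x P = 1 then P else P + 1 := by
  have htok : ∀ j, j ≤ m ∧ IsToken (x j) ↔ j = P := fun j => by
    simpa [tokens, Nat.lt_succ_iff] using congrArg (j ∈ ·) hx
  have hP := (htok P).2 rfl
  unfold Privileged
  constructor
  · rintro (⟨hi, h⟩ | ⟨hi0, h⟩)
    · obtain rfl := (htok i).1 ⟨hi, .inl h⟩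
      simp [h]
    · obtain hP' := (htok (i - 1)).1 ⟨by omega, .inr h⟩
      rw [← hP', h, if_neg (by decide)]
      omega
  · rintro rfl
    split_ifs with h
    · exact .inl ⟨hP.1, h⟩
    · exact .inr ⟨by omega, by simpa using hP.2.resolve_left h⟩

section Game

variable {n : ℕ}

/-- The difference across edge `j` (between players `j` and `j + 1`); it is `0` for `j ≥ n - 1`,
so the game on `n` players is read on the edges `0, …, n - 2`. -/
def edgeDiff (s : Fin n → ZMod 4) (j : ℕ) : ZMod 4 :=
  if h : j + 1 < n then s ⟨j + 1, h⟩ - s ⟨j, by omega⟩ else 0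

theorem edgeDiff_update (s : Fin n → ZMod 4) (i : Fin n) (v : ZMod 4) (j : ℕ) :
    edgeDiff (update s i v) j = edgeDiff s j + (if j + 1 = i.val then v - s i else 0) -
      (if j = i.val ∧ j + 1 < n then v - s i else 0) := by
  obtain ⟨k, hk⟩ := i
  unfold edgeDiff
  by_cases hj : j + 1 < n
  · rw [dif_pos hj, dif_pos hj]
    simp only [hj, and_true, update_apply, Fin.mk.injEq]
    split_ifs <;> first | omega | (subst_vars; ring)
  · rw [dif_neg hj, dif_neg hj, if_neg (by omega), if_neg (by omega)]
    ring

theorem edgeDiff_update_add_of_lt (s : Fin n → ZMod 4) {i : Fin n} (hi : i.val + 1 < n)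
    (a : ZMod 4) :
    edgeDiff (update s i (s i + a)) =
      update (update (edgeDiff s) (i.val - 1) (edgeDiff s (i.val - 1) + a)) i
        (edgeDiff s i - a) := by
  ext j
  rw [edgeDiff_update, add_sub_cancel_left]
  simp only [update_apply]
  split_ifs <;> first | omega | (subst_vars; ring)

theorem edgeDiff_update_add_of_last (hn : 2 ≤ n) (s : Fin n → ZMod 4) {i : Fin n}
    (hi : i.val = n - 1) (a : ZMod 4) :
    edgeDiff (update s i (s i + a)) =
      update (edgeDiff s) (i.val - 1) (edgeDiff s (i.val - 1) + a) := by
  ext j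
  rw [edgeDiff_update, add_sub_cancel_left]
  simp only [update_apply]
  split_ifs <;> first | omega | (subst_vars; ring)

variable [NeZero n]

theorem edgeDiff_of_lt (s : Fin n → ZMod 4) {i : Fin n} (h : i.val + 1 < n) :
    edgeDiff s i = s (i + 1) - s i := by
  rw [edgeDiff, dif_pos h]
  congr 2
  ext
  simp [Fin.val_add_one_of_lt' h]

theorem edgeDiff_sub_one (s : Fin n → ZMod 4) {i : Fin n} (h : i ≠ 0) :
    edgeDiff s (i.val - 1) = s i - s (i - 1) := by
  have hi : 0 < i.val := Fin.pos_iff_ne_zero.2 h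
  rw [edgeDiff, dif_pos (by omega)]
  congr 2
  · ext; simp; omega
  · ext; simp [Fin.val_sub_one_of_ne_zero h]

theorem not_bestResponseOn_zero_iff (hn : 2 ≤ n) (s : Fin n → ZMod 4) :
    ¬ BestResponseOn (fourPayoff n) (fourValid n) s 0 ↔ edgeDiff s 0 = 1 := by
  have h10 : (1 : Fin n) ≠ 0 := by simp [Fin.ext_iff]; omega
  have hd : edgeDiff s 0 = s 1 - s 0 := by simpa using edgeDiff_of_lt s (i := 0) (by simp; omega)
  simp only [BestResponseOn, fourPayoff, fourValid, ↓reduceIte, update_self, update_of_ne h10, hd]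
  generalize s 0 = a, s 1 = b
  revert a b
  decide

theorem not_bestResponseOn_last_iff (hn : 2 ≤ n) (s : Fin n → ZMod 4) {i : Fin n}
    (hi : i.val = n - 1) :
    ¬ BestResponseOn (fourPayoff n) (fourValid n) s i ↔ edgeDiff s (i.val - 1) = 3 := by
  have h0 : i ≠ 0 := by rintro rfl; simp at hi; omega
  have hne : i - 1 ≠ i := by rw [Ne, Fin.ext_iff, Fin.val_sub_one_of_ne_zero h0]; omega
  rw [edgeDiff_sub_one s h0]
  simp only [BestResponseOn, fourPayoff, fourValid, if_neg h0, if_pos hi, update_self,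
    update_of_ne hne]
  generalize s (i - 1) = l, s i = a
  revert l a
  decide

theorem not_bestResponseOn_middle_iff (s : Fin n → ZMod 4) {i : Fin n} (h0 : i ≠ 0)
    (hi : i.val + 1 < n) :
    ¬ BestResponseOn (fourPayoff n) (fourValid n) s i ↔
      edgeDiff s i = 1 ∨ edgeDiff s (i.val - 1) = 3 := by
  have hpos : 0 < i.val := Fin.pos_iff_ne_zero.2 h0
  have hne : i - 1 ≠ i := by rw [Ne, Fin.ext_iff, Fin.val_sub_one_of_ne_zero h0]; omega
  have hne' : i + 1 ≠ i := by rw [Ne, Fin.ext_iff, Fin.val_add_one_of_lt' hi]; omega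
  have hlast : i.val ≠ n - 1 := by omega
  simp only [BestResponseOn, fourPayoff, fourValid, if_neg h0, if_neg hlast, forall_const,
    update_self, update_of_ne hne, update_of_ne hne', edgeDiff_sub_one s h0, edgeDiff_of_lt s hi]
  generalize s (i - 1) = l, s i = a, s (i + 1) = r
  revert l a r
  decide

theorem not_bestResponseOn_iff (hn : 2 ≤ n) (s : Fin n → ZMod 4) (i : Fin n) :
    ¬ BestResponseOn (fourPayoff n) (fourValid n) s i ↔ Privileged (n - 2) (edgeDiff s) i := by
  unfold Privileged
  by_cases h0 : i = 0
  · subst h0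
    simp [not_bestResponseOn_zero_iff hn]
  by_cases hlast : i.val = n - 1
  · rw [not_bestResponseOn_last_iff hn s hlast]
    have : 0 < i.val := Fin.pos_iff_ne_zero.2 h0
    constructor
    · exact fun h => .inr ⟨this, h⟩
    · rintro (⟨h, -⟩ | ⟨-, h⟩)
      · omega
      · exact h
  · have : 0 < i.val := Fin.pos_iff_ne_zero.2 h0
    rw [not_bestResponseOn_middle_iff s h0 (by omega)]
    simp only [this, true_and, show i.val ≤ n - 2 by omega]

theorem tokenStep_of_scheduler (hn : 2 ≤ n) {f : (Fin n → ZMod 4) → Fin n → ZMod 4}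
    (hf0 : ∀ s : Fin n → ZMod 4, f s 0 = s 0 + 2)
    (hfmid : ∀ (s : Fin n → ZMod 4) (i : Fin n), 0 < i.val → i.val < n - 1 → f s i = s i + 1)
    (hftop : ∀ s : Fin n → ZMod 4, f s ⟨n - 1, by omega⟩ = s ⟨n - 1, by omega⟩ + 2)
    {s : Fin n → ZMod 4} {i : Fin n} (hi : ¬ BestResponseOn (fourPayoff n) (fourValid n) s i) :
    TokenStep (n - 2) (edgeDiff s) (edgeDiff (update s i (f s i))) i := by
  by_cases h0 : i = 0
  · subst h0
    have hd := (not_bestResponseOn_zero_iff hn s).1 hi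
    rw [hf0, edgeDiff_update_add_of_lt s (by simp; omega), Fin.val_zero, update_idem]
    convert TokenStep.bottom hd using 2
    rw [hd]
    decide
  have hpos : 0 < i.val := Fin.pos_iff_ne_zero.2 h0
  by_cases hlast : i.val = n - 1
  · have hd := (not_bestResponseOn_last_iff hn s hlast).1 hi
    have hf : f s i = s i + 2 := by
      rw [show i = ⟨n - 1, by omega⟩ from Fin.ext hlast]
      exact hftop s
    rw [hf, edgeDiff_update_add_of_last hn s hlast]
    rw [show i.val - 1 = n - 2 by omega] at hd ⊢
    convert TokenStep.top hd using 2
    · rw [hd]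
      decide
    · omega
  · have hd := (not_bestResponseOn_middle_iff s h0 (by omega)).1 hi
    rw [hfmid s i hpos (by omega), edgeDiff_update_add_of_lt s (by omega)]
    have hj : i.val - 1 + 1 = i.val := by omega
    have := TokenStep.middle (m := n - 2) (x := edgeDiff s) (j := i.val - 1) (by omega)
      (by rw [hj]; exact hd.symm)
    rwa [hj] at this

theorem legitimateOn_of_card_tokens_eq_one (hn : 2 ≤ n) {s : Fin n → ZMod 4}
    (h : #(tokens (n - 2) (edgeDiff s)) = 1) : LegitimateOn (fourPayoff n) (fourValid n) s := by
  obtain ⟨P, hP⟩ := card_eq_one.1 h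
  have hPn : P ≤ n - 2 := by
    have hmem : P ∈ tokens (n - 2) (edgeDiff s) := hP ▸ mem_singleton_self P
    simp only [tokens, mem_filter, mem_range] at hmem
    omega
  have key : ∀ i : Fin n, ¬ BestResponseOn (fourPayoff n) (fourValid n) s i ↔
      i.val = if edgeDiff s P = 1 then P else P + 1 := fun i =>
    (not_bestResponseOn_iff hn s i).trans (privileged_iff_of_tokens_eq hP (by omega))
  have hlt : (if edgeDiff s P = 1 then P else P + 1) < n := by split_ifs <;> omega
  exact ⟨⟨_, hlt⟩, (key _).2 rfl, fun i hi => Fin.ext ((key i).1 hi)⟩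

end Game

end FourState

/-- In the four-state game on `n ≥ 3` players, every scheduler `f`
(a function that, at any valid joint strategy `s` and any player `i` not playing a
best response in `s`, returns an allowed better response `f s i` for `i`) satisfying
`f s 0 = s 0 + 2` (the bottom machine), `f s i = s i + 1` for `0 < i < n - 1`
(the normal machines), and `f s ⟨n-1⟩ = s ⟨n-1⟩ + 2` (the top machine) ensures
self-stabilization: in every improvement path generated by `f` (starting from a
valid joint strategy), every player is selected infinitely often and, from a
certain point on, every joint strategy in it is legitimate. -/
theorem four_state_scheduler_self_stabilization
    (n : ℕ) [NeZero n] (hn : 3 ≤ n)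
    (f : (Fin n → ZMod 4) → Fin n → ZMod 4)
    (hf0 : ∀ s : Fin n → ZMod 4, f s 0 = s 0 + 2)
    (hfmid : ∀ (s : Fin n → ZMod 4) (i : Fin n),
      0 < i.val → i.val < n - 1 → f s i = s i + 1)
    (hftop : ∀ s : Fin n → ZMod 4,
      f s ⟨n - 1, by omega⟩ = s ⟨n - 1, by omega⟩ + 2)
    (σ : ℕ → Fin n → ZMod 4) (sel : ℕ → Fin n)
    (hgen : ∀ k : ℕ,
      ¬ BestResponseOn (fourPayoff n) (fourValid n) (σ k) (sel k) ∧
      σ (k + 1) = Function.update (σ k) (sel k) (f (σ k) (sel k))) :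
    (∀ (i : Fin n) (k : ℕ), ∃ m, k ≤ m ∧ sel m = i) ∧
    (∃ K : ℕ, ∀ m, K ≤ m → LegitimateOn (fourPayoff n) (fourValid n) (σ m)) := by
  have hstep : ∀ k, FourState.TokenStep (n - 2) (FourState.edgeDiff (σ k))
      (FourState.edgeDiff (σ (k + 1))) (sel k) := fun k => by
    rw [(hgen k).2]
    exact FourState.tokenStep_of_scheduler (by omega) hf0 hfmid hftop (hgen k).1
  obtain ⟨K, hK⟩ := FourState.eventually_pureStep_and_single_token hstep
  refine ⟨fun i k => ?_, K, fun k hk =>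
    FourState.legitimateOn_of_card_tokens_eq_one (by omega) (hK k hk).2⟩
  obtain ⟨k', hk', hsel⟩ := FourState.selects_every_machine hK (i := i) (by omega) k
  exact ⟨k', hk', Fin.ext hsel⟩
end
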